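/- arXiv:2105.02014 — 2 statements merged into one kernel-verified Lean document; each statement's English description precedes it below -/
import Mathlib

section
/- Let A, B, C, D ∈ ℝ² be four points, no three collinear, with each pair of opposite sides non-parallel and diagonal points A₁ = AD ∩ BC, B₁ = AB ∩ CD, C₁ = AC ∩ BD, and let P ∈ ℝ² be a point lying on none of the six sides. Let m₁ be a line through A₁ that is a harmonic conjugate of the line PA₁ with respect to the sides AD and BC; let m₂ be a line through B₁ that is a harmonic conjugate of the line PB₁ with respect to AB and CD; and let m₃ be a line through C₁ that is a harmonic conjugate of the line PC₁ with respect to AC and BD. Then any point of ℝ² lying on two of the lines m₁, m₂, m₃ also lies on the third (the three harmonic-conjugate lines are concurrent). -/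
/-- An affine subspace of the plane is a line if it is the affine span of two distinct
points. -/
def IsLine (l : AffineSubspace ℝ (EuclideanSpace ℝ (Fin 2))) : Prop :=
  ∃ p q : EuclideanSpace ℝ (Fin 2), p ≠ q ∧ l = line[ℝ, p, q]

/-- `P'` is the harmonic conjugate of `P` with respect to the distinct points `A` and `B`:
`P = A + s•(B - A)` with `s ∉ {0, 1, 1/2}` and `P' = A + (s/(2s-1))•(B - A)`. -/
def IsHarmonicConj (A B P P' : EuclideanSpace ℝ (Fin 2)) : Prop :=
  ∃ s : ℝ, s ≠ 0 ∧ s ≠ 1 ∧ s ≠ 1 / 2 ∧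
    P = A + s • (B - A) ∧ P' = A + (s / (2 * s - 1)) • (B - A)

/-- The line `m'` is a harmonic conjugate of the line `m` with respect to the lines `l₁`,
`l₂`, all four passing through the common point `V`: some transversal line `t` not through
`V` meets `l₁, l₂, m, m'` in points `X₁, X₂, Y, Y'` respectively, where `Y'` is the harmonic
conjugate of `Y` with respect to `X₁` and `X₂`. -/
def IsHarmonicConjLines (V : EuclideanSpace ℝ (Fin 2))
    (l₁ l₂ m m' : AffineSubspace ℝ (EuclideanSpace ℝ (Fin 2))) : Prop :=
  V ∈ l₁ ∧ V ∈ l₂ ∧ V ∈ m ∧ V ∈ m' ∧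
  ∃ t : AffineSubspace ℝ (EuclideanSpace ℝ (Fin 2)), IsLine t ∧ V ∉ t ∧
    ∃ X₁ X₂ Y Y' : EuclideanSpace ℝ (Fin 2),
      X₁ ∈ t ∧ X₁ ∈ l₁ ∧ X₂ ∈ t ∧ X₂ ∈ l₂ ∧ Y ∈ t ∧ Y ∈ m ∧ Y' ∈ t ∧ Y' ∈ m' ∧
      X₁ ≠ X₂ ∧ IsHarmonicConj X₁ X₂ Y Y'

noncomputable section

local notation "Pt" => EuclideanSpace ℝ (Fin 2)

private lemma mem_line_iff' {p q z : Pt} : z ∈ line[ℝ, p, q] ↔ ∃ r : ℝ, z - p = r • (q - p) := by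
  constructor
  · intro h
    have : (z - p) +ᵥ p ∈ line[ℝ, p, q] := by simpa [vadd_eq_add] using h
    obtain ⟨r, hr⟩ := (vadd_left_mem_affineSpan_pair).1 this
    exact ⟨r, by simpa [vsub_eq_sub] using hr.symm⟩
  · rintro ⟨r, hr⟩
    have : (z - p) +ᵥ p ∈ line[ℝ, p, q] :=
      (vadd_left_mem_affineSpan_pair).2 ⟨r, by simpa [vsub_eq_sub] using hr.symm⟩
    simpa [vadd_eq_add] using this

private lemma span_singleton_eq_of_smul' {v w : Pt} {c : ℝ} (hc : c ≠ 0) (h : v = c • w) :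
    (ℝ ∙ v) = ℝ ∙ w := by
  apply le_antisymm
  · rw [Submodule.span_singleton_le_iff_mem, Submodule.mem_span_singleton]
    exact ⟨c, h.symm⟩
  · rw [Submodule.span_singleton_le_iff_mem, Submodule.mem_span_singleton]
    exact ⟨c⁻¹, by rw [h, smul_smul, inv_mul_cancel₀ hc, one_smul]⟩

private lemma line_eq_of_isLine' {m : AffineSubspace ℝ Pt}
    (hm : IsLine m) {p q : Pt}
    (hp : p ∈ m) (hq : q ∈ m) (hpq : p ≠ q) : m = line[ℝ, p, q] := by
  obtain ⟨u, v, huv, rfl⟩ := hm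
  symm
  apply AffineSubspace.ext_of_direction_eq
  · rw [direction_affineSpan, direction_affineSpan, vectorSpan_pair_rev, vectorSpan_pair_rev]
    obtain ⟨r, hr⟩ := mem_line_iff'.1 hq
    obtain ⟨r', hr'⟩ := mem_line_iff'.1 hp
    have hqp : q - p = (r - r') • (v - u) := by
      rw [sub_smul, ← hr, ← hr']; abel
    have hrr' : r - r' ≠ 0 := by
      intro h0
      apply hpq
      have : q - p = 0 := by rw [hqp, h0, zero_smul]
      exact (sub_eq_zero.1 this).symm
    exact span_singleton_eq_of_smul' hrr' (by simpa [vsub_eq_sub] using hqp)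
  · exact ⟨p, left_mem_affineSpan_pair ℝ p q, hp⟩

private lemma indep_of_not_parallel' {p q r s : Pt} (hpq : q - p ≠ 0) (hrs : s - r ≠ 0)
    (h : ¬ line[ℝ, p, q].Parallel line[ℝ, r, s]) :
    ∀ a b : ℝ, a • (q - p) + b • (s - r) = 0 → a = 0 ∧ b = 0 := by
  intro a b hab
  by_contra hcon
  apply h
  rw [AffineSubspace.affineSpan_pair_parallel_iff_vectorSpan_eq,
    vectorSpan_pair_rev, vectorSpan_pair_rev]
  have ha : a ≠ 0 := by
    intro ha0
    apply hcon
    refine ⟨ha0, ?_⟩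
    rw [ha0, zero_smul, zero_add] at hab
    rcases smul_eq_zero.1 hab with h' | h'
    · exact h'
    · exact absurd h' hrs
  have hb : b ≠ 0 := by
    intro hb0
    apply hcon
    refine ⟨?_, hb0⟩
    rw [hb0, zero_smul, add_zero] at hab
    rcases smul_eq_zero.1 hab with h' | h'
    · exact h'
    · exact absurd h' hpq
  have h2 : a • (q - p) = (-b) • (s - r) := by
    have h3 : a • (q - p) + b • (s - r) - b • (s - r) = -(b • (s - r)) := by rw [hab]; abel
    rw [neg_smul, ← h3]; abel
  have h3 : q - p = (a⁻¹ * (-b)) • (s - r) := by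
    rw [mul_smul, ← h2, inv_smul_smul₀ ha]
  have hcoef : a⁻¹ * (-b) ≠ 0 := mul_ne_zero (inv_ne_zero ha) (neg_ne_zero.2 hb)
  simpa [vsub_eq_sub] using span_singleton_eq_of_smul' hcoef h3

private lemma exists_ratio' (v0 v1 w0 w1 : ℝ) (h : v0 * w1 - v1 * w0 = 0)
    (hw : ¬(w0 = 0 ∧ w1 = 0)) : ∃ r : ℝ, v0 = r * w0 ∧ v1 = r * w1 := by
  by_cases hw0 : w0 = 0
  · have hw1 : w1 ≠ 0 := fun h1 => hw ⟨hw0, h1⟩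
    refine ⟨v1 / w1, ?_, by field_simp⟩
    have h2 : v0 * w1 = 0 := by rw [hw0] at h; linarith
    have h3 : v0 = 0 := by
      rcases mul_eq_zero.1 h2 with h' | h'
      · exact h'
      · exact absurd h' hw1
    rw [h3, hw0, mul_zero]
  · refine ⟨v0 / w0, by field_simp, ?_⟩
    rw [div_mul_eq_mul_div, eq_div_iff hw0]
    linarith [h]

private lemma harmonic_package' {V Ap Dp Bp Cp Pp : Pt} {m' : AffineSubspace ℝ Pt}
    (indep : ∀ a b : ℝ, a • (Dp - Ap) + b • (Cp - Bp) = 0 → a = 0 ∧ b = 0)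
    (hm' : IsLine m')
    (hh : IsHarmonicConjLines V line[ℝ, Ap, Dp] line[ℝ, Bp, Cp] line[ℝ, Pp, V] m') :
    ∃ k l : ℝ, k ≠ 0 ∧ l ≠ 0 ∧ Pp - V = k • (Dp - Ap) + l • (Cp - Bp) ∧
      ∀ X : Pt, X ∈ m' ↔ ∃ r : ℝ, X - V = r • (l • (Cp - Bp) - k • (Dp - Ap)) := by
  obtain ⟨hV1, hV2, hVm, hVm', t, htl, hVt, X₁, X₂, Y, Y', hX₁t, hX₁l₁, hX₂t, hX₂l₂,
    hYt, hYm, hY't, hY'm', hX₁X₂, s, hs0, hs1, hshalf, hYdef, hY'def⟩ := hh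
  set u₁ := Dp - Ap with hu₁
  set u₂ := Cp - Bp with hu₂
  obtain ⟨p₁, hp₁⟩ := mem_line_iff'.1 hX₁l₁
  obtain ⟨q₁, hq₁⟩ := mem_line_iff'.1 hV1
  have hX₁V : X₁ - V = (p₁ - q₁) • u₁ := by
    rw [sub_smul, ← hp₁, ← hq₁]; abel
  set a := p₁ - q₁ with ha
  have haa : a ≠ 0 := by
    intro h0
    rw [h0, zero_smul, sub_eq_zero] at hX₁V
    exact hVt (hX₁V ▸ hX₁t)
  obtain ⟨p₂, hp₂⟩ := mem_line_iff'.1 hX₂l₂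
  obtain ⟨q₂, hq₂⟩ := mem_line_iff'.1 hV2
  have hX₂V : X₂ - V = (p₂ - q₂) • u₂ := by
    rw [sub_smul, ← hp₂, ← hq₂]; abel
  set b := p₂ - q₂ with hb
  have hbb : b ≠ 0 := by
    intro h0
    rw [h0, zero_smul, sub_eq_zero] at hX₂V
    exact hVt (hX₂V ▸ hX₂t)
  obtain ⟨e, he⟩ := mem_line_iff'.1 hYm
  have hYV : Y - V = (1 - e) • (Pp - V) := by
    have h1 : Y - Pp = e • (V - Pp) := he
    have h2 : Y - V = (Y - Pp) - (V - Pp) := by abel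
    rw [h2, h1, sub_smul, one_smul]
    module
  set c := 1 - e with hc
  have hcc : c ≠ 0 := by
    intro h0
    rw [h0, zero_smul, sub_eq_zero] at hYV
    exact hVt (hYV ▸ hYt)
  have h2s : (2 : ℝ) * s - 1 ≠ 0 := by
    intro h0
    apply hshalf
    field_simp at h0 ⊢
    linarith
  have key1 : c • (Pp - V) = ((1 - s) * a) • u₁ + (s * b) • u₂ := by
    rw [← hYV]
    have h1 : Y - V = (X₁ - V) + s • ((X₂ - V) - (X₁ - V)) := by
      rw [hYdef]; module
    rw [h1, hX₁V, hX₂V]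
    module
  have key2 : (2 * s - 1) • (Y' - V) = (-((1 - s) * a)) • u₁ + (s * b) • u₂ := by
    have h1 : Y' - V = (X₁ - V) + (s / (2 * s - 1)) • ((X₂ - V) - (X₁ - V)) := by
      rw [hY'def]; module
    rw [h1, hX₁V, hX₂V]
    match_scalars <;> field_simp <;> ring
  set k := (1 - s) * a / c with hk
  set l := s * b / c with hl
  have hkne : k ≠ 0 := by
    apply div_ne_zero _ hcc
    exact mul_ne_zero (by intro h0; exact hs1 (by linarith [sub_eq_zero.1 h0])) haa
  have hlne : l ≠ 0 := div_ne_zero (mul_ne_zero hs0 hbb) hcc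
  have hPV : Pp - V = k • u₁ + l • u₂ := by
    apply smul_right_injective Pt hcc
    show c • (Pp - V) = c • (k • u₁ + l • u₂)
    rw [key1, hk, hl]
    match_scalars <;> field_simp <;> ring
  refine ⟨k, l, hkne, hlne, hPV, ?_⟩
  set w := l • u₂ - k • u₁ with hw
  have hwne : w ≠ 0 := by
    intro h0
    apply hkne
    have h1 : (-k) • u₁ + l • u₂ = 0 := by rw [← h0, hw]; module
    have := (indep _ _ h1).1
    simpa [neg_eq_zero] using this
  set c2 := (2 * s - 1)⁻¹ * c with hc2
  have hc2ne : c2 ≠ 0 := mul_ne_zero (inv_ne_zero h2s) hcc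
  have hY'V : Y' - V = c2 • w := by
    have h1 : (2 * s - 1) • (Y' - V) = c • w := by
      rw [key2, hw, hk, hl]
      match_scalars <;> field_simp <;> ring
    have h2 : Y' - V = (2 * s - 1)⁻¹ • ((2 * s - 1) • (Y' - V)) := by
      rw [inv_smul_smul₀ h2s]
    rw [h2, h1, smul_smul, hc2]
  have hY'neV : Y' ≠ V := by
    intro h0
    have h1 : Y' - V = 0 := by rw [h0, sub_self]
    rw [hY'V] at h1
    exact hwne (by simpa [hc2ne] using (smul_eq_zero.1 h1).resolve_left hc2ne)
  have hm'eq : m' = line[ℝ, V, Y'] := line_eq_of_isLine' hm' hVm' hY'm' (Ne.symm hY'neV)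
  intro X
  rw [hm'eq, mem_line_iff']
  constructor
  · rintro ⟨r, hr⟩
    exact ⟨r * c2, by rw [hr, hY'V, smul_smul]⟩
  · rintro ⟨r, hr⟩
    refine ⟨r * c2⁻¹, ?_⟩
    rw [hY'V, smul_smul, mul_assoc, inv_mul_cancel₀ hc2ne, mul_one, hr]

set_option maxHeartbeats 2000000 in
/-- Given a complete quadrangle `A B C D` with diagonal points `A₁, B₁, C₁` and a point `P`
on none of the six sides, the three lines obtained as harmonic conjugates of `PA₁, PB₁, PC₁`
with respect to the pairs of sides through `A₁, B₁, C₁` respectively are concurrent: any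
point on two of them lies on the third. -/
theorem harmonic_conjugate_lines_concurrent
    (A B C D A₁ B₁ C₁ P : EuclideanSpace ℝ (Fin 2))
    (h1 : AffineIndependent ℝ ![A, B, C])
    (h2 : AffineIndependent ℝ ![A, B, D])
    (h3 : AffineIndependent ℝ ![A, C, D])
    (h4 : AffineIndependent ℝ ![B, C, D])
    (hpar1 : ¬ AffineSubspace.Parallel line[ℝ, A, B] line[ℝ, C, D])
    (hpar2 : ¬ AffineSubspace.Parallel line[ℝ, A, C] line[ℝ, B, D])
    (hpar3 : ¬ AffineSubspace.Parallel line[ℝ, A, D] line[ℝ, B, C])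
    (hA₁1 : A₁ ∈ line[ℝ, A, D]) (hA₁2 : A₁ ∈ line[ℝ, B, C])
    (hB₁1 : B₁ ∈ line[ℝ, A, B]) (hB₁2 : B₁ ∈ line[ℝ, C, D])
    (hC₁1 : C₁ ∈ line[ℝ, A, C]) (hC₁2 : C₁ ∈ line[ℝ, B, D])
    -- `P` lies on none of the six sides
    (hP1 : P ∉ line[ℝ, A, B]) (hP2 : P ∉ line[ℝ, A, C]) (hP3 : P ∉ line[ℝ, A, D])
    (hP4 : P ∉ line[ℝ, B, C]) (hP5 : P ∉ line[ℝ, B, D]) (hP6 : P ∉ line[ℝ, C, D])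
    (m₁ m₂ m₃ : AffineSubspace ℝ (EuclideanSpace ℝ (Fin 2)))
    (hm₁ : IsLine m₁) (hm₁V : A₁ ∈ m₁)
    (hh₁ : IsHarmonicConjLines A₁ line[ℝ, A, D] line[ℝ, B, C] line[ℝ, P, A₁] m₁)
    (hm₂ : IsLine m₂) (hm₂V : B₁ ∈ m₂)
    (hh₂ : IsHarmonicConjLines B₁ line[ℝ, A, B] line[ℝ, C, D] line[ℝ, P, B₁] m₂)
    (hm₃ : IsLine m₃) (hm₃V : C₁ ∈ m₃)
    (hh₃ : IsHarmonicConjLines C₁ line[ℝ, A, C] line[ℝ, B, D] line[ℝ, P, C₁] m₃) :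
    ∀ X : EuclideanSpace ℝ (Fin 2),
      (X ∈ m₁ ∧ X ∈ m₂ → X ∈ m₃) ∧
      (X ∈ m₁ ∧ X ∈ m₃ → X ∈ m₂) ∧
      (X ∈ m₂ ∧ X ∈ m₃ → X ∈ m₁) := by
  have hBA : B ≠ A := by
    have := h1.injective.ne (show (1 : Fin 3) ≠ 0 by decide); simpa using this
  have hCA : C ≠ A := by
    have := h1.injective.ne (show (2 : Fin 3) ≠ 0 by decide); simpa using this
  have hDA : D ≠ A := by
    have := h2.injective.ne (show (2 : Fin 3) ≠ 0 by decide); simpa using this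
  have hDC : D ≠ C := by
    have := h3.injective.ne (show (2 : Fin 3) ≠ 1 by decide); simpa using this
  have hDB : D ≠ B := by
    have := h4.injective.ne (show (2 : Fin 3) ≠ 0 by decide); simpa using this
  have hCB : C ≠ B := by
    have := h1.injective.ne (show (2 : Fin 3) ≠ 1 by decide); simpa using this
  have indep₁ := indep_of_not_parallel' (sub_ne_zero.2 hDA) (sub_ne_zero.2 hCB) hpar3
  have indep₂ := indep_of_not_parallel' (sub_ne_zero.2 hBA) (sub_ne_zero.2 hDC) hpar1
  have indep₃ := indep_of_not_parallel' (sub_ne_zero.2 hCA) (sub_ne_zero.2 hDB) hpar2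
  obtain ⟨k1, l1, hk1ne, hl1ne, hPV1, hiff1⟩ := harmonic_package' indep₁ hm₁ hh₁
  obtain ⟨k2, l2, hk2ne, hl2ne, hPV2, hiff2⟩ := harmonic_package' indep₂ hm₂ hh₂
  obtain ⟨k3, l3, hk3ne, hl3ne, hPV3, hiff3⟩ := harmonic_package' indep₃ hm₃ hh₃
  have li : LinearIndependent ℝ ![B - A, C - A] := by
    rw [LinearIndependent.pair_iff]
    intro s t hst
    have hsum : ∑ e : Fin 3, ![-(s + t), s, t] e = 0 := by
      rw [Fin.sum_univ_three]
      simp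
    have hvec : ∑ e : Fin 3, ![-(s + t), s, t] e • ![A, B, C] e = 0 := by
      rw [Fin.sum_univ_three]
      simp only [Matrix.cons_val_zero, Matrix.cons_val_one, Matrix.head_cons,
        Matrix.cons_val_two, Matrix.tail_cons]
      linear_combination (norm := module) hst
    have hz := affineIndependent_iff.1 h1 Finset.univ ![-(s + t), s, t]
      (by simpa using hsum) (by simpa using hvec)
    constructor
    · simpa using hz 1 (Finset.mem_univ _)
    · simpa using hz 2 (Finset.mem_univ _)
  obtain ⟨bas, hbas⟩ : ∃ b : Module.Basis (Fin 2) ℝ (EuclideanSpace ℝ (Fin 2)),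
      ⇑b = ![B - A, C - A] :=
    ⟨basisOfLinearIndependentOfCardEqFinrank li (by simp),
      coe_basisOfLinearIndependentOfCardEqFinrank li (by simp)⟩
  have hcosub : ∀ v w : EuclideanSpace ℝ (Fin 2), ∀ i : Fin 2,
      bas.repr (v - w) i = bas.repr v i - bas.repr w i := fun v w i => by simp
  have hcosmul : ∀ (r : ℝ) (v : EuclideanSpace ℝ (Fin 2)) (i : Fin 2),
      bas.repr (r • v) i = r * bas.repr v i := fun r v i => by simp
  have hcoadd : ∀ v w : EuclideanSpace ℝ (Fin 2), ∀ i : Fin 2,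
      bas.repr (v + w) i = bas.repr v i + bas.repr w i := fun v w i => by simp
  have hb0 : bas 0 = B - A := by rw [hbas]; simp
  have hb1 : bas 1 = C - A := by rw [hbas]; simp
  have hcoB0 : bas.repr (B - A) 0 = 1 := by rw [← hb0]; simp
  have hcoB1 : bas.repr (B - A) 1 = 0 := by rw [← hb0]; simp [Finsupp.single_apply]
  have hcoC0 : bas.repr (C - A) 0 = 0 := by rw [← hb1]; simp [Finsupp.single_apply]
  have hcoC1 : bas.repr (C - A) 1 = 1 := by rw [← hb1]; simp
  have vec_ext : ∀ v w : EuclideanSpace ℝ (Fin 2),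
      bas.repr v 0 = bas.repr w 0 → bas.repr v 1 = bas.repr w 1 → v = w := by
    intro v w hv0 hv1
    apply bas.repr.injective
    apply Finsupp.ext
    intro i
    fin_cases i <;> assumption
  set al := bas.repr (D - A) 0 with hal
  set be := bas.repr (D - A) 1 with hbe
  set px := bas.repr (P - A) 0 with hpx
  set py := bas.repr (P - A) 1 with hpy
  have hCB0 : bas.repr (C - B) 0 = -1 := by
    rw [show C - B = (C - A) - (B - A) from by abel, hcosub, hcoC0, hcoB0]; ring
  have hCB1 : bas.repr (C - B) 1 = 1 := by
    rw [show C - B = (C - A) - (B - A) from by abel, hcosub, hcoC1, hcoB1]; ring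
  have hDC0 : bas.repr (D - C) 0 = al := by
    rw [show D - C = (D - A) - (C - A) from by abel, hcosub, hcoC0, ← hal]; ring
  have hDC1 : bas.repr (D - C) 1 = be - 1 := by
    rw [show D - C = (D - A) - (C - A) from by abel, hcosub, hcoC1, ← hbe]
  have hDB0 : bas.repr (D - B) 0 = al - 1 := by
    rw [show D - B = (D - A) - (B - A) from by abel, hcosub, hcoB0, ← hal]
  have hDB1 : bas.repr (D - B) 1 = be := by
    rw [show D - B = (D - A) - (B - A) from by abel, hcosub, hcoB1, ← hbe]; ring
  -- coordinates of the diagonal points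
  obtain ⟨tA, htA0⟩ := mem_line_iff'.1 hA₁1
  obtain ⟨rA, hrA0⟩ := mem_line_iff'.1 hA₁2
  have hA₁c0 : bas.repr (A₁ - A) 0 = tA * al := by rw [htA0, hcosmul, ← hal]
  have hA₁c1 : bas.repr (A₁ - A) 1 = tA * be := by rw [htA0, hcosmul, ← hbe]
  have e2a : tA * al - 1 = rA * (-1) := by
    have g1 : bas.repr (A₁ - B) 0 = tA * al - 1 := by
      rw [show A₁ - B = (A₁ - A) - (B - A) from by abel, hcosub, hA₁c0, hcoB0]
    have g2 : bas.repr (A₁ - B) 0 = rA * (-1) := by rw [hrA0, hcosmul, hCB0]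
    rw [← g1, g2]
  have e2b : tA * be - 0 = rA * 1 := by
    have g1 : bas.repr (A₁ - B) 1 = tA * be - 0 := by
      rw [show A₁ - B = (A₁ - A) - (B - A) from by abel, hcosub, hA₁c1, hcoB1]
    have g2 : bas.repr (A₁ - B) 1 = rA * 1 := by rw [hrA0, hcosmul, hCB1]
    rw [← g1, g2]
  have htA : tA * (al + be) = 1 := by linear_combination e2a + e2b
  obtain ⟨rB, hrB0⟩ := mem_line_iff'.1 hB₁1
  obtain ⟨tB, htB0⟩ := mem_line_iff'.1 hB₁2
  have hB₁c1 : bas.repr (B₁ - A) 1 = 0 := by rw [hrB0, hcosmul, hcoB1, mul_zero]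
  have e3a : bas.repr (B₁ - A) 0 - 0 = tB * al := by
    have g1 : bas.repr (B₁ - C) 0 = bas.repr (B₁ - A) 0 - 0 := by
      rw [show B₁ - C = (B₁ - A) - (C - A) from by abel, hcosub, hcoC0]
    have g2 : bas.repr (B₁ - C) 0 = tB * al := by rw [htB0, hcosmul, hDC0]
    rw [← g1, g2]
  have e3b : bas.repr (B₁ - A) 1 - 1 = tB * (be - 1) := by
    have g1 : bas.repr (B₁ - C) 1 = bas.repr (B₁ - A) 1 - 1 := by
      rw [show B₁ - C = (B₁ - A) - (C - A) from by abel, hcosub, hcoC1]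
    have g2 : bas.repr (B₁ - C) 1 = tB * (be - 1) := by rw [htB0, hcosmul, hDC1]
    rw [← g1, g2]
  have htB : tB * (1 - be) = 1 := by linear_combination e3b - hB₁c1
  have hB₁c0 : bas.repr (B₁ - A) 0 = tB * al := by linear_combination e3a
  obtain ⟨rC, hrC0⟩ := mem_line_iff'.1 hC₁1
  obtain ⟨tC, htC0⟩ := mem_line_iff'.1 hC₁2
  have hC₁c0 : bas.repr (C₁ - A) 0 = 0 := by rw [hrC0, hcosmul, hcoC0, mul_zero]
  have e4a : bas.repr (C₁ - A) 0 - 1 = tC * (al - 1) := by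
    have g1 : bas.repr (C₁ - B) 0 = bas.repr (C₁ - A) 0 - 1 := by
      rw [show C₁ - B = (C₁ - A) - (B - A) from by abel, hcosub, hcoB0]
    have g2 : bas.repr (C₁ - B) 0 = tC * (al - 1) := by rw [htC0, hcosmul, hDB0]
    rw [← g1, g2]
  have e4b : bas.repr (C₁ - A) 1 - 0 = tC * be := by
    have g1 : bas.repr (C₁ - B) 1 = bas.repr (C₁ - A) 1 - 0 := by
      rw [show C₁ - B = (C₁ - A) - (B - A) from by abel, hcosub, hcoB1]
    have g2 : bas.repr (C₁ - B) 1 = tC * be := by rw [htC0, hcosmul, hDB1]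
    rw [← g1, g2]
  have htC : tC * (1 - al) = 1 := by linear_combination e4a - hC₁c0
  have hC₁c1 : bas.repr (C₁ - A) 1 = tC * be := by linear_combination e4b
  have hsA : al + be ≠ 0 := by
    intro h0; rw [h0, mul_zero] at htA; exact zero_ne_one htA
  have hsB : 1 - be ≠ 0 := by
    intro h0; rw [h0, mul_zero] at htB; exact zero_ne_one htB
  have hsC : 1 - al ≠ 0 := by
    intro h0; rw [h0, mul_zero] at htC; exact zero_ne_one htC
  -- coordinates of the package equations
  have hF1 : px - tA * al = k1 * al - l1 := by
    have g1 : bas.repr (P - A₁) 0 = px - tA * al := by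
      rw [show P - A₁ = (P - A) - (A₁ - A) from by abel, hcosub, hA₁c0, ← hpx]
    have g2 : bas.repr (P - A₁) 0 = k1 * al + l1 * (-1) := by
      rw [hPV1, hcoadd, hcosmul, hcosmul, hCB0, ← hal]
    linear_combination g2 - g1
  have hF2 : py - tA * be = k1 * be + l1 := by
    have g1 : bas.repr (P - A₁) 1 = py - tA * be := by
      rw [show P - A₁ = (P - A) - (A₁ - A) from by abel, hcosub, hA₁c1, ← hpy]
    have g2 : bas.repr (P - A₁) 1 = k1 * be + l1 * 1 := by
      rw [hPV1, hcoadd, hcosmul, hcosmul, hCB1, ← hbe]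
    linear_combination g2 - g1
  have hF3 : px - tB * al = k2 + l2 * al := by
    have g1 : bas.repr (P - B₁) 0 = px - tB * al := by
      rw [show P - B₁ = (P - A) - (B₁ - A) from by abel, hcosub, hB₁c0, ← hpx]
    have g2 : bas.repr (P - B₁) 0 = k2 * 1 + l2 * al := by
      rw [hPV2, hcoadd, hcosmul, hcosmul, hcoB0, hDC0]
    linear_combination g2 - g1
  have hF4 : py = l2 * (be - 1) := by
    have g1 : bas.repr (P - B₁) 1 = py - 0 := by
      rw [show P - B₁ = (P - A) - (B₁ - A) from by abel, hcosub, hB₁c1, ← hpy]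
    have g2 : bas.repr (P - B₁) 1 = k2 * 0 + l2 * (be - 1) := by
      rw [hPV2, hcoadd, hcosmul, hcosmul, hcoB1, hDC1]
    linear_combination g2 - g1
  have hF5 : px = l3 * (al - 1) := by
    have g1 : bas.repr (P - C₁) 0 = px - 0 := by
      rw [show P - C₁ = (P - A) - (C₁ - A) from by abel, hcosub, hC₁c0, ← hpx]
    have g2 : bas.repr (P - C₁) 0 = k3 * 0 + l3 * (al - 1) := by
      rw [hPV3, hcoadd, hcosmul, hcosmul, hcoC0, hDB0]
    linear_combination g2 - g1
  have hF6 : py - tC * be = k3 + l3 * be := by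
    have g1 : bas.repr (P - C₁) 1 = py - tC * be := by
      rw [show P - C₁ = (P - A) - (C₁ - A) from by abel, hcosub, hC₁c1, ← hpy]
    have g2 : bas.repr (P - C₁) 1 = k3 * 1 + l3 * be := by
      rw [hPV3, hcoadd, hcosmul, hcosmul, hcoC1, hDB1]
    linear_combination g2 - g1
  have hk1v : k1 = tA * (px + py - 1) := by
    linear_combination (-tA) * hF1 + (-tA) * hF2 + (-(tA + k1)) * htA
  have hl1v : l1 = tA * (al * py - be * px) := by
    linear_combination (tA * be) * hF1 + (-(tA * al)) * hF2 + (-l1) * htA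
  have hl2v : l2 = -(tB * py) := by
    linear_combination tB * hF4 + (-l2) * htB
  have hk2v : k2 = tB * ((1 - be) * px + al * py - al) := by
    linear_combination (-1 : ℝ) * hF3 + (-(tB * al)) * hF4 + (al * l2 - px) * htB
  have hl3v : l3 = -(tC * px) := by
    linear_combination tC * hF5 + (-l3) * htC
  have hk3v : k3 = tC * ((1 - al) * py + be * px - be) := by
    linear_combination (-(tC * be)) * hF5 + (-1 : ℝ) * hF6 + (be * l3 - py) * htC
  subst hk1v hl1v hk2v hl2v hk3v hl3v
  intro X
  set x0 := bas.repr (X - A) 0 with hx0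
  set x1 := bas.repr (X - A) 1 with hx1
  have getcr1 : X ∈ m₁ → (x0 - tA * al) * ((tA * (al * py - be * px)) * 1 - (tA * (px + py - 1)) * be) - (x1 - tA * be) * ((tA * (al * py - be * px)) * (-1) - (tA * (px + py - 1)) * al) = 0 := by
    intro hX
    obtain ⟨r, hr⟩ := (hiff1 X).1 hX
    have gL0 : bas.repr (X - A₁) 0 = x0 - tA * al := by
      rw [show X - A₁ = (X - A) - (A₁ - A) from by abel, hcosub, hA₁c0, ← hx0]
    have gL1 : bas.repr (X - A₁) 1 = x1 - tA * be := by
      rw [show X - A₁ = (X - A) - (A₁ - A) from by abel, hcosub, hA₁c1, ← hx1]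
    have gR0 : bas.repr ((tA * (al * py - be * px)) • (C - B) - (tA * (px + py - 1)) • (D - A)) 0 = ((tA * (al * py - be * px)) * (-1) - (tA * (px + py - 1)) * al) := by
      rw [hcosub, hcosmul, hcosmul, hCB0, ← hal]
    have gR1 : bas.repr ((tA * (al * py - be * px)) • (C - B) - (tA * (px + py - 1)) • (D - A)) 1 = ((tA * (al * py - be * px)) * 1 - (tA * (px + py - 1)) * be) := by
      rw [hcosub, hcosmul, hcosmul, hCB1, ← hbe]
    have g0 : x0 - tA * al = r * ((tA * (al * py - be * px)) * (-1) - (tA * (px + py - 1)) * al) := by rw [← gL0, hr, hcosmul, gR0]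
    have g1 : x1 - tA * be = r * ((tA * (al * py - be * px)) * 1 - (tA * (px + py - 1)) * be) := by rw [← gL1, hr, hcosmul, gR1]
    linear_combination ((tA * (al * py - be * px)) * 1 - (tA * (px + py - 1)) * be) * g0 - ((tA * (al * py - be * px)) * (-1) - (tA * (px + py - 1)) * al) * g1
  have getcr2 : X ∈ m₂ → (x0 - tB * al) * ((-(tB * py)) * (be - 1) - (tB * ((1 - be) * px + al * py - al)) * 0) - (x1 - 0) * ((-(tB * py)) * al - (tB * ((1 - be) * px + al * py - al)) * 1) = 0 := by
    intro hX
    obtain ⟨r, hr⟩ := (hiff2 X).1 hX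
    have gL0 : bas.repr (X - B₁) 0 = x0 - tB * al := by
      rw [show X - B₁ = (X - A) - (B₁ - A) from by abel, hcosub, hB₁c0, ← hx0]
    have gL1 : bas.repr (X - B₁) 1 = x1 - (0:ℝ) := by
      rw [show X - B₁ = (X - A) - (B₁ - A) from by abel, hcosub, hB₁c1, ← hx1]
    have gR0 : bas.repr ((-(tB * py)) • (D - C) - (tB * ((1 - be) * px + al * py - al)) • (B - A)) 0 = ((-(tB * py)) * al - (tB * ((1 - be) * px + al * py - al)) * 1) := by
      rw [hcosub, hcosmul, hcosmul, hDC0, hcoB0]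
    have gR1 : bas.repr ((-(tB * py)) • (D - C) - (tB * ((1 - be) * px + al * py - al)) • (B - A)) 1 = ((-(tB * py)) * (be - 1) - (tB * ((1 - be) * px + al * py - al)) * 0) := by
      rw [hcosub, hcosmul, hcosmul, hDC1, hcoB1]
    have g0 : x0 - tB * al = r * ((-(tB * py)) * al - (tB * ((1 - be) * px + al * py - al)) * 1) := by rw [← gL0, hr, hcosmul, gR0]
    have g1 : x1 - (0:ℝ) = r * ((-(tB * py)) * (be - 1) - (tB * ((1 - be) * px + al * py - al)) * 0) := by rw [← gL1, hr, hcosmul, gR1]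
    linear_combination ((-(tB * py)) * (be - 1) - (tB * ((1 - be) * px + al * py - al)) * 0) * g0 - ((-(tB * py)) * al - (tB * ((1 - be) * px + al * py - al)) * 1) * g1
  have getcr3 : X ∈ m₃ → (x0 - 0) * ((-(tC * px)) * be - (tC * ((1 - al) * py + be * px - be)) * 1) - (x1 - tC * be) * ((-(tC * px)) * (al - 1) - (tC * ((1 - al) * py + be * px - be)) * 0) = 0 := by
    intro hX
    obtain ⟨r, hr⟩ := (hiff3 X).1 hX
    have gL0 : bas.repr (X - C₁) 0 = x0 - (0:ℝ) := by
      rw [show X - C₁ = (X - A) - (C₁ - A) from by abel, hcosub, hC₁c0, ← hx0]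
    have gL1 : bas.repr (X - C₁) 1 = x1 - tC * be := by
      rw [show X - C₁ = (X - A) - (C₁ - A) from by abel, hcosub, hC₁c1, ← hx1]
    have gR0 : bas.repr ((-(tC * px)) • (D - B) - (tC * ((1 - al) * py + be * px - be)) • (C - A)) 0 = ((-(tC * px)) * (al - 1) - (tC * ((1 - al) * py + be * px - be)) * 0) := by
      rw [hcosub, hcosmul, hcosmul, hDB0, hcoC0]
    have gR1 : bas.repr ((-(tC * px)) • (D - B) - (tC * ((1 - al) * py + be * px - be)) • (C - A)) 1 = ((-(tC * px)) * be - (tC * ((1 - al) * py + be * px - be)) * 1) := by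
      rw [hcosub, hcosmul, hcosmul, hDB1, hcoC1]
    have g0 : x0 - (0:ℝ) = r * ((-(tC * px)) * (al - 1) - (tC * ((1 - al) * py + be * px - be)) * 0) := by rw [← gL0, hr, hcosmul, gR0]
    have g1 : x1 - tC * be = r * ((-(tC * px)) * be - (tC * ((1 - al) * py + be * px - be)) * 1) := by rw [← gL1, hr, hcosmul, gR1]
    linear_combination ((-(tC * px)) * be - (tC * ((1 - al) * py + be * px - be)) * 1) * g0 - ((-(tC * px)) * (al - 1) - (tC * ((1 - al) * py + be * px - be)) * 0) * g1
  have put1 : (x0 - tA * al) * ((tA * (al * py - be * px)) * 1 - (tA * (px + py - 1)) * be) - (x1 - tA * be) * ((tA * (al * py - be * px)) * (-1) - (tA * (px + py - 1)) * al) = 0 → X ∈ m₁ := by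
    intro hcr
    have hwne : ¬(((tA * (al * py - be * px)) * (-1) - (tA * (px + py - 1)) * al) = 0 ∧ ((tA * (al * py - be * px)) * 1 - (tA * (px + py - 1)) * be) = 0) := by
      rintro ⟨hw0, hw1⟩
      have hprod : (tA * (px + py - 1)) * (al + be) = 0 := by
        linear_combination (-1 : ℝ) * hw0 + (-1 : ℝ) * hw1
      rcases mul_eq_zero.1 hprod with h' | h'
      · exact hk1ne h'
      · exact hsA h' 
    obtain ⟨r, hr0, hr1⟩ := exists_ratio' (x0 - tA * al) (x1 - tA * be)
      ((tA * (al * py - be * px)) * (-1) - (tA * (px + py - 1)) * al) ((tA * (al * py - be * px)) * 1 - (tA * (px + py - 1)) * be) (by linear_combination hcr) hwne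
    refine (hiff1 X).2 ⟨r, ?_⟩
    apply vec_ext
    · rw [show X - A₁ = (X - A) - (A₁ - A) from by abel, hcosub, hA₁c0, ← hx0,
        hcosmul, hcosub, hcosmul, hcosmul, hCB0, ← hal]
      linear_combination hr0
    · rw [show X - A₁ = (X - A) - (A₁ - A) from by abel, hcosub, hA₁c1, ← hx1,
        hcosmul, hcosub, hcosmul, hcosmul, hCB1, ← hbe]
      linear_combination hr1
  have put2 : (x0 - tB * al) * ((-(tB * py)) * (be - 1) - (tB * ((1 - be) * px + al * py - al)) * 0) - (x1 - 0) * ((-(tB * py)) * al - (tB * ((1 - be) * px + al * py - al)) * 1) = 0 → X ∈ m₂ := by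
    intro hcr
    have hwne : ¬(((-(tB * py)) * al - (tB * ((1 - be) * px + al * py - al)) * 1) = 0 ∧ ((-(tB * py)) * (be - 1) - (tB * ((1 - be) * px + al * py - al)) * 0) = 0) := by
      rintro ⟨hw0, hw1⟩
      have hy : (-(tB * py)) * (be - 1) = 0 := by linear_combination hw1
      rcases mul_eq_zero.1 hy with h' | h'
      · exact hl2ne h'
      · exact hsB (by linarith)
    obtain ⟨r, hr0, hr1⟩ := exists_ratio' (x0 - tB * al) (x1 - (0:ℝ))
      ((-(tB * py)) * al - (tB * ((1 - be) * px + al * py - al)) * 1) ((-(tB * py)) * (be - 1) - (tB * ((1 - be) * px + al * py - al)) * 0) (by linear_combination hcr) hwne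
    refine (hiff2 X).2 ⟨r, ?_⟩
    apply vec_ext
    · rw [show X - B₁ = (X - A) - (B₁ - A) from by abel, hcosub, hB₁c0, ← hx0,
        hcosmul, hcosub, hcosmul, hcosmul, hDC0, hcoB0]
      linear_combination hr0
    · rw [show X - B₁ = (X - A) - (B₁ - A) from by abel, hcosub, hB₁c1, ← hx1,
        hcosmul, hcosub, hcosmul, hcosmul, hDC1, hcoB1]
      linear_combination hr1
  have put3 : (x0 - 0) * ((-(tC * px)) * be - (tC * ((1 - al) * py + be * px - be)) * 1) - (x1 - tC * be) * ((-(tC * px)) * (al - 1) - (tC * ((1 - al) * py + be * px - be)) * 0) = 0 → X ∈ m₃ := by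
    intro hcr
    have hwne : ¬(((-(tC * px)) * (al - 1) - (tC * ((1 - al) * py + be * px - be)) * 0) = 0 ∧ ((-(tC * px)) * be - (tC * ((1 - al) * py + be * px - be)) * 1) = 0) := by
      rintro ⟨hw0, hw1⟩
      have hx : (-(tC * px)) * (al - 1) = 0 := by linear_combination hw0
      rcases mul_eq_zero.1 hx with h' | h'
      · exact hl3ne h'
      · exact hsC (by linarith)
    obtain ⟨r, hr0, hr1⟩ := exists_ratio' (x0 - (0:ℝ)) (x1 - tC * be)
      ((-(tC * px)) * (al - 1) - (tC * ((1 - al) * py + be * px - be)) * 0) ((-(tC * px)) * be - (tC * ((1 - al) * py + be * px - be)) * 1) (by linear_combination hcr) hwne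
    refine (hiff3 X).2 ⟨r, ?_⟩
    apply vec_ext
    · rw [show X - C₁ = (X - A) - (C₁ - A) from by abel, hcosub, hC₁c0, ← hx0,
        hcosmul, hcosub, hcosmul, hcosmul, hDB0, hcoC0]
      linear_combination hr0
    · rw [show X - C₁ = (X - A) - (C₁ - A) from by abel, hcosub, hC₁c1, ← hx1,
        hcosmul, hcosub, hcosmul, hcosmul, hDB1, hcoC1]
      linear_combination hr1
  refine ⟨?_, ?_, ?_⟩
  · rintro ⟨hXa, hXb⟩
    have hcr1 := getcr1 hXa
    have hcr2 := getcr2 hXb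
    apply put3
    linear_combination ((al+be)*tC) * hcr1 + (-((1-be)*tC)) * hcr2 + (al^2*be^2*py*tA*tB^2*tC + al^2*be*px*tA*tC^2 + 2*al^2*be*py*x1*tA*tB*tC - 2*al^2*be*py*tA*tB^2*tC - al^2*be*x1*tA*tB*tC - 2*al^2*py*x1*tA*tB*tC + 2*al^2*py*x1*tA*tC + al^2*py*tA*tB^2*tC + al^2*x1*tA*tB*tC - al^2*x1*tA*tC + al*be^3*py*tA*tB^2*tC - al*be^2*px*x1*tA*tB*tC + al*be^2*px*tA*tC^2 - al*be^2*py*x0*tA*tB*tC + 2*al*be^2*py*x1*tA*tB*tC - 2*al*be^2*py*tA*tB^2*tC + al*be^2*py*tB^2*tC - al*be^2*x1*tA*tB*tC + 2*al*be*px*x1*tA*tB*tC - al*be*px*x1*tA*tC - al*be*px*tA*tC^2 + al*be*px*tC^2 + 2*al*be*py*x0*tA*tB*tC - al*be*py*x0*tA*tC - 2*al*be*py*x1*tA*tB*tC + 2*al*be*py*x1*tA*tC + 2*al*be*py*x1*tB*tC + al*be*py*tA*tB^2*tC - 2*al*be*py*tB^2*tC + al*be*x1*tA*tB*tC - al*be*x1*tA*tC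 - al*be*x1*tB*tC - al*px*x1*tA*tB*tC + al*px*x1*tA*tC - al*px*x1*tC - al*py*x0*tA*tB*tC + al*py*x0*tA*tC - al*py*x0*tC - 2*al*py*x1*tB*tC + al*py*tB^2*tC + al*x1*tB*tC - be^3*px*x1*tA*tB*tC - be^3*py*x0*tA*tB*tC + 2*be^2*px*x1*tA*tB*tC - be^2*px*x1*tA*tC - be^2*px*x1*tB*tC - be^2*px*tA*tC^2 + 2*be^2*py*x0*tA*tB*tC - be^2*py*x0*tA*tC - be^2*py*x0*tB*tC + 2*be*px*x0*tC - be*px*x1*tA*tB*tC + be*px*x1*tA*tC + 2*be*px*x1*tB*tC - be*px*tC^2 - be*py*x0*tA*tB*tC + be*py*x0*tA*tC + 2*be*py*x0*tB*tC - be*x0*tC - px*x1*tB*tC + px*x1*tC - py*x0*tB*tC + py*x0*tC) * htA + (-al^3*be^2*px*tA^2*tB*tC^2 + al^3*be*px*tA^2*tB*tC^2 + al^3*be*px*tA^2*tC^2 + al^3*be*py*tA^2*tB*tC + 2*al^3*py*x1*tA^2*tC - al^3*py*tA^2*tB*tC - al^3*py*tA^2*tC - al^3*x1*tA^2*tC -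 2*al^2*be^3*px*tA^2*tB*tC^2 + 3*al^2*be^2*px*tA^2*tB*tC^2 - al^2*be^2*px*tA^2*tB*tC + 2*al^2*be^2*px*tA^2*tC^2 + 2*al^2*be^2*py*tA^2*tB*tC - al^2*be*px*x1*tA^2*tC - al^2*be*px*tA^2*tB*tC^2 + al^2*be*px*tA^2*tB*tC - al^2*be*px*tA^2*tC^2 + al^2*be*px*tA^2*tC - al^2*be*py*x0*tA^2*tC + 4*al^2*be*py*x1*tA^2*tC - 2*al^2*be*py*tA^2*tB*tC - 2*al^2*be*py*tA^2*tC - 2*al^2*be*x1*tA^2*tC + al^2*px*x1*tA^2*tC + al^2*py*x0*tA^2*tC - al*be^4*px*tA^2*tB*tC^2 + 3*al*be^3*px*tA^2*tB*tC^2 - 2*al*be^3*px*tA^2*tB*tC + al*be^3*px*tA^2*tC^2 + al*be^3*py*tA^2*tB*tC - 2*al*be^2*px*x1*tA^2*tC - 2*al*be^2*px*tA^2*tB*tC^2 + 2*al*be^2*px*tA^2*tB*tC - 2*al*be^2*px*tA^2*tC^2 + 2*al*be^2*px*tA^2*tC - 2*al*be^2*py*x0*tA^2*tC + 2*al*be^2*py*x1*tA^2*tC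 - al*be^2*py*tA^2*tB*tC - al*be^2*py*tA^2*tC - al*be^2*x1*tA^2*tC + 2*al*be*px*x1*tA^2*tC + 2*al*be*py*x0*tA^2*tC + be^4*px*tA^2*tB*tC^2 - be^4*px*tA^2*tB*tC - be^3*px*x1*tA^2*tC - be^3*px*tA^2*tB*tC^2 + be^3*px*tA^2*tB*tC - be^3*px*tA^2*tC^2 + be^3*px*tA^2*tC - be^3*py*x0*tA^2*tC + be^2*px*x1*tA^2*tC + be^2*py*x0*tA^2*tC) * htB + (al^2*be^3*px*tA^2*tB^2*tC - 2*al^2*be^2*px*tA^2*tB^2*tC + al^2*be*px*tA^2*tB^2*tC + 2*al*be^4*px*tA^2*tB^2*tC - 4*al*be^3*px*tA^2*tB^2*tC + 2*al*be^2*px*tA^2*tB^2*tC + be^5*px*tA^2*tB^2*tC - 2*be^4*px*tA^2*tB^2*tC + be^3*px*tA^2*tB^2*tC) * htC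
  · rintro ⟨hXa, hXb⟩
    have hcr1 := getcr1 hXa
    have hcr3 := getcr3 hXb
    apply put2
    linear_combination ((al+be)*tB) * hcr1 + (-((1-al)*tB)) * hcr3 + (-al^3*be*px*tA*tB*tC^2 + al^3*px*x1*tA*tB*tC + al^3*py*x0*tA*tB*tC - al^2*be^2*px*tA*tB*tC^2 - 2*al^2*be*px*x0*tA*tB*tC + al^2*be*px*x1*tA*tB*tC + 2*al^2*be*px*tA*tB*tC^2 - al^2*be*px*tB*tC^2 + al^2*be*py*x0*tA*tB*tC - al^2*be*py*tA*tB^2 + al^2*be*x0*tA*tB*tC - 2*al^2*px*x1*tA*tB*tC + al^2*px*x1*tA*tB + al^2*px*x1*tB*tC - 2*al^2*py*x0*tA*tB*tC + al^2*py*x0*tA*tB + al^2*py*x0*tB*tC + al^2*py*tA*tB^2 - 2*al*be^2*px*x0*tA*tB*tC + 2*al*be^2*px*tA*tB*tC^2 - al*be^2*py*tA*tB^2 + al*be^2*x0*tA*tB*tC + 2*al*be*px*x0*tA*tB*tC - 2*al*be*px*x0*tA*tB - 2*al*be*px*x0*tB*tC - 2*al*be*px*x1*tA*tB*tC + al*be*px*x1*tA*tB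 - al*be*px*tA*tB*tC^2 + 2*al*be*px*tB*tC^2 - 2*al*be*py*x0*tA*tB*tC + al*be*py*x0*tA*tB + al*be*py*tA*tB^2 - al*be*py*tB^2 - al*be*x0*tA*tB*tC + al*be*x0*tA*tB + al*be*x0*tB*tC + al*px*x1*tA*tB*tC - al*px*x1*tA*tB - 2*al*px*x1*tB*tC + al*py*x0*tA*tB*tC - al*py*x0*tA*tB - 2*al*py*x0*tB*tC - 2*al*py*x1*tB + al*py*tB^2 + al*x1*tB + 2*be^2*px*x0*tA*tB*tC - 2*be^2*px*x0*tA*tB - be^2*px*tA*tB*tC^2 - be^2*x0*tA*tB*tC + be^2*x0*tA*tB + 2*be*px*x0*tB*tC + be*px*x1*tA*tB*tC - be*px*x1*tA*tB + be*px*x1*tB - be*px*tB*tC^2 + be*py*x0*tA*tB*tC - be*py*x0*tA*tB + be*py*x0*tB - be*x0*tB*tC + px*x1*tB*tC - px*x1*tB + py*x0*tB*tC - py*x0*tB) * htA + (-al^4*be*px*tA^2*tB*tC^2 + al^4*px*x1*tA^2*tB*tC + al^4*py*x0*tA^2*tB*tC - 2*al^3*be^2*px*tA^2*tB*tC^2 -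 2*al^3*be*px*x0*tA^2*tB*tC + 2*al^3*be*px*x1*tA^2*tB*tC + 2*al^3*be*px*tA^2*tB*tC^2 + 2*al^3*be*py*x0*tA^2*tB*tC + al^3*be*x0*tA^2*tB*tC - 2*al^3*px*x1*tA^2*tB*tC + al^3*px*x1*tA^2*tB - 2*al^3*py*x0*tA^2*tB*tC + al^3*py*x0*tA^2*tB - al^3*py*tA^2*tB - al^2*be^3*px*tA^2*tB*tC^2 - 4*al^2*be^2*px*x0*tA^2*tB*tC + al^2*be^2*px*x1*tA^2*tB*tC + 4*al^2*be^2*px*tA^2*tB*tC^2 + al^2*be^2*py*x0*tA^2*tB*tC + 2*al^2*be^2*x0*tA^2*tB*tC + 2*al^2*be*px*x0*tA^2*tB*tC - 2*al^2*be*px*x0*tA^2*tB - 4*al^2*be*px*x1*tA^2*tB*tC + 2*al^2*be*px*x1*tA^2*tB - al^2*be*px*tA^2*tB*tC^2 + al^2*be*px*tA^2*tB - 4*al^2*be*py*x0*tA^2*tB*tC + 2*al^2*be*py*x0*tA^2*tB - 2*al^2*be*py*tA^2*tB - al^2*be*x0*tA^2*tB*tC + al^2*be*x0*tA^2*tB +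 al^2*px*x1*tA^2*tB*tC - al^2*px*x1*tA^2*tB + al^2*py*x0*tA^2*tB*tC - al^2*py*x0*tA^2*tB - 2*al*be^3*px*x0*tA^2*tB*tC + 2*al*be^3*px*tA^2*tB*tC^2 + al*be^3*x0*tA^2*tB*tC + 4*al*be^2*px*x0*tA^2*tB*tC - 4*al*be^2*px*x0*tA^2*tB - 2*al*be^2*px*x1*tA^2*tB*tC + al*be^2*px*x1*tA^2*tB - 2*al*be^2*px*tA^2*tB*tC^2 + 2*al*be^2*px*tA^2*tB - 2*al*be^2*py*x0*tA^2*tB*tC + al*be^2*py*x0*tA^2*tB - al*be^2*py*tA^2*tB - 2*al*be^2*x0*tA^2*tB*tC + 2*al*be^2*x0*tA^2*tB + 2*al*be*px*x1*tA^2*tB*tC - 2*al*be*px*x1*tA^2*tB + 2*al*be*py*x0*tA^2*tB*tC - 2*al*be*py*x0*tA^2*tB + 2*be^3*px*x0*tA^2*tB*tC - 2*be^3*px*x0*tA^2*tB - be^3*px*tA^2*tB*tC^2 + be^3*px*tA^2*tB - be^3*x0*tA^2*tB*tC + be^3*x0*tA^2*tB + be^2*px*x1*tA^2*tB*tC - be^2*px*x1*tA^2*tB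 + be^2*py*x0*tA^2*tB*tC - be^2*py*x0*tA^2*tB) * htB + (al^3*be^2*px*tA^2*tB^2*tC - al^3*be*px*x1*tA^2*tB^2 - al^3*be*px*tA^2*tB^2*tC - al^3*be*py*x0*tA^2*tB^2 + al^3*px*x1*tA^2*tB^2 + al^3*py*x0*tA^2*tB^2 + 2*al^2*be^3*px*tA^2*tB^2*tC + 2*al^2*be^2*px*x0*tA^2*tB^2 - 2*al^2*be^2*px*x1*tA^2*tB^2 - 3*al^2*be^2*px*tA^2*tB^2*tC - al^2*be^2*px*tA^2*tB^2 - 2*al^2*be^2*py*x0*tA^2*tB^2 - al^2*be^2*x0*tA^2*tB^2 - 2*al^2*be*px*x0*tA^2*tB^2 + 3*al^2*be*px*x1*tA^2*tB^2 + al^2*be*px*tA^2*tB^2*tC + al^2*be*px*tA^2*tB^2 + 3*al^2*be*py*x0*tA^2*tB^2 + al^2*be*x0*tA^2*tB^2 - al^2*px*x1*tA^2*tB^2 - al^2*py*x0*tA^2*tB^2 + al*be^4*px*tA^2*tB^2*tC + 4*al*be^3*px*x0*tA^2*tB^2 - al*be^3*px*x1*tA^2*tB^2 - 3*al*be^3*px*tA^2*tB^2*tC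 - 2*al*be^3*px*tA^2*tB^2 - al*be^3*py*x0*tA^2*tB^2 - 2*al*be^3*x0*tA^2*tB^2 - 4*al*be^2*px*x0*tA^2*tB^2 + 3*al*be^2*px*x1*tA^2*tB^2 + 2*al*be^2*px*tA^2*tB^2*tC + 2*al*be^2*px*tA^2*tB^2 + 3*al*be^2*py*x0*tA^2*tB^2 + 2*al*be^2*x0*tA^2*tB^2 - 2*al*be*px*x1*tA^2*tB^2 - 2*al*be*py*x0*tA^2*tB^2 + 2*be^4*px*x0*tA^2*tB^2 - be^4*px*tA^2*tB^2*tC - be^4*px*tA^2*tB^2 - be^4*x0*tA^2*tB^2 - 2*be^3*px*x0*tA^2*tB^2 + be^3*px*x1*tA^2*tB^2 + be^3*px*tA^2*tB^2*tC + be^3*px*tA^2*tB^2 + be^3*py*x0*tA^2*tB^2 + be^3*x0*tA^2*tB^2 - be^2*px*x1*tA^2*tB^2 - be^2*py*x0*tA^2*tB^2) * htC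
  · rintro ⟨hXa, hXb⟩
    have hcr2 := getcr2 hXa
    have hcr3 := getcr3 hXb
    apply put1
    linear_combination ((1-be)*tA) * hcr2 + ((1-al)*tA) * hcr3 + (al^2*be*px*tA*tC^2 - al^2*px*x1*tA*tC - al^2*py*x0*tA*tC - al*be^2*py*tA*tB^2 + 2*al*be*px*x0*tA*tC - 2*al*be*px*tA*tC^2 - 2*al*be*py*x1*tA*tB + 2*al*be*py*tA*tB^2 - al*be*x0*tA*tC + al*be*x1*tA*tB + 2*al*px*x1*tA*tC - al*px*x1*tA + 2*al*py*x0*tA*tC - al*py*x0*tA + 2*al*py*x1*tA*tB - 2*al*py*x1*tA - al*py*tA*tB^2 - al*x1*tA*tB + al*x1*tA + be^2*px*x1*tA*tB + be^2*py*x0*tA*tB - 2*be*px*x0*tA*tC + 2*be*px*x0*tA - 2*be*px*x1*tA*tB + be*px*x1*tA + be*px*tA*tC^2 - 2*be*py*x0*tA*tB + be*py*x0*tA + be*x0*tA*tC - be*x0*tA + px*x1*tA*tB - px*x1*tA*tC + py*x0*tA*tB - py*x0*tA*tC) * htA + (-al^3*be^2*px*tA^2*tB*tC^2 + al^3*be*px*x1*tA^2*tB*tC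 + al^3*be*px*tA^2*tB*tC^2 + al^3*be*px*tA^2*tC^2 + al^3*be*py*x0*tA^2*tB*tC - al^3*px*x1*tA^2*tB*tC - al^3*px*x1*tA^2*tC - al^3*py*x0*tA^2*tB*tC - al^3*py*x0*tA^2*tC - al^2*be^3*px*tA^2*tB*tC^2 - 2*al^2*be^2*px*x0*tA^2*tB*tC + al^2*be^2*px*x1*tA^2*tB*tC + 3*al^2*be^2*px*tA^2*tB*tC^2 + al^2*be^2*px*tA^2*tC^2 + al^2*be^2*py*x0*tA^2*tB*tC + al^2*be^2*x0*tA^2*tB*tC + 2*al^2*be*px*x0*tA^2*tB*tC + 2*al^2*be*px*x0*tA^2*tC - 3*al^2*be*px*x1*tA^2*tB*tC + al^2*be*px*x1*tA^2*tB - al^2*be*px*x1*tA^2*tC - 2*al^2*be*px*tA^2*tB*tC^2 - 2*al^2*be*px*tA^2*tC^2 - 3*al^2*be*py*x0*tA^2*tB*tC + al^2*be*py*x0*tA^2*tB - al^2*be*py*x0*tA^2*tC - al^2*be*py*tA^2*tB - al^2*be*x0*tA^2*tB*tC - al^2*be*x0*tA^2*tC + 2*al^2*px*x1*tA^2*tB*tC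 - al^2*px*x1*tA^2*tB + 2*al^2*px*x1*tA^2*tC - al^2*px*x1*tA^2 + 2*al^2*py*x0*tA^2*tB*tC - al^2*py*x0*tA^2*tB + 2*al^2*py*x0*tA^2*tC - al^2*py*x0*tA^2 - 2*al^2*py*x1*tA^2 + al^2*py*tA^2*tB + al^2*py*tA^2 + al^2*x1*tA^2 - 2*al*be^3*px*x0*tA^2*tB*tC + 2*al*be^3*px*tA^2*tB*tC^2 + al*be^3*x0*tA^2*tB*tC + 4*al*be^2*px*x0*tA^2*tB*tC - 2*al*be^2*px*x0*tA^2*tB + 2*al*be^2*px*x0*tA^2*tC - 2*al*be^2*px*x1*tA^2*tB*tC + al*be^2*px*x1*tA^2*tB - 3*al*be^2*px*tA^2*tB*tC^2 + al*be^2*px*tA^2*tB - 2*al*be^2*px*tA^2*tC^2 - 2*al*be^2*py*x0*tA^2*tB*tC + al*be^2*py*x0*tA^2*tB - al*be^2*py*tA^2*tB - 2*al*be^2*x0*tA^2*tB*tC + al*be^2*x0*tA^2*tB - al*be^2*x0*tA^2*tC - 2*al*be*px*x0*tA^2*tB*tC + 2*al*be*px*x0*tA^2*tB - 2*al*be*px*x0*tA^2*tC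 + 2*al*be*px*x0*tA^2 + 3*al*be*px*x1*tA^2*tB*tC - 2*al*be*px*x1*tA^2*tB + 2*al*be*px*x1*tA^2*tC + al*be*px*tA^2*tB*tC^2 - al*be*px*tA^2*tB + al*be*px*tA^2*tC^2 - al*be*px*tA^2 + 3*al*be*py*x0*tA^2*tB*tC - 2*al*be*py*x0*tA^2*tB + 2*al*be*py*x0*tA^2*tC - 2*al*be*py*x1*tA^2 + al*be*py*tA^2*tB + al*be*py*tA^2 + al*be*x0*tA^2*tB*tC - al*be*x0*tA^2*tB + al*be*x0*tA^2*tC - al*be*x0*tA^2 + al*be*x1*tA^2 - al*px*x1*tA^2*tB*tC + al*px*x1*tA^2*tB - al*px*x1*tA^2*tC - al*py*x0*tA^2*tB*tC + al*py*x0*tA^2*tB - al*py*x0*tA^2*tC + 2*be^3*px*x0*tA^2*tB*tC - 2*be^3*px*x0*tA^2*tB - be^3*px*tA^2*tB*tC^2 + be^3*px*tA^2*tB - be^3*x0*tA^2*tB*tC + be^3*x0*tA^2*tB - 2*be^2*px*x0*tA^2*tB*tC + 2*be^2*px*x0*tA^2*tB - 2*be^2*px*x0*tA^2*tC + 2*be^2*px*x0*tA^2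 + be^2*px*x1*tA^2*tB*tC - be^2*px*x1*tA^2*tB + be^2*px*x1*tA^2 + be^2*px*tA^2*tB*tC^2 - be^2*px*tA^2*tB + be^2*px*tA^2*tC^2 - be^2*px*tA^2 + be^2*py*x0*tA^2*tB*tC - be^2*py*x0*tA^2*tB + be^2*py*x0*tA^2 + be^2*x0*tA^2*tB*tC - be^2*x0*tA^2*tB + be^2*x0*tA^2*tC - be^2*x0*tA^2 - be*px*x1*tA^2*tB*tC + be*px*x1*tA^2*tB - be*px*x1*tA^2*tC - be*py*x0*tA^2*tB*tC + be*py*x0*tA^2*tB - be*py*x0*tA^2*tC) * htB + (al^2*be^3*px*tA^2*tB^2*tC - al^2*be^2*px*x1*tA^2*tB^2 - 2*al^2*be^2*px*tA^2*tB^2*tC - al^2*be^2*py*x0*tA^2*tB^2 + 2*al^2*be*px*x1*tA^2*tB^2 + al^2*be*px*tA^2*tB^2*tC + 2*al^2*be*py*x0*tA^2*tB^2 - al^2*px*x1*tA^2*tB^2 - al^2*py*x0*tA^2*tB^2 + al*be^4*px*tA^2*tB^2*tC + 2*al*be^3*px*x0*tA^2*tB^2 - al*be^3*px*x1*tA^2*tB^2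 - 3*al*be^3*px*tA^2*tB^2*tC - al*be^3*px*tA^2*tB^2 - al*be^3*py*x0*tA^2*tB^2 - al*be^3*x0*tA^2*tB^2 - 4*al*be^2*px*x0*tA^2*tB^2 + 3*al*be^2*px*x1*tA^2*tB^2 + 3*al*be^2*px*tA^2*tB^2*tC + 2*al*be^2*px*tA^2*tB^2 + 3*al*be^2*py*x0*tA^2*tB^2 + 2*al*be^2*x0*tA^2*tB^2 + 2*al*be*px*x0*tA^2*tB^2 - 3*al*be*px*x1*tA^2*tB^2 - al*be*px*tA^2*tB^2*tC - al*be*px*tA^2*tB^2 - 3*al*be*py*x0*tA^2*tB^2 - al*be*x0*tA^2*tB^2 + al*px*x1*tA^2*tB^2 + al*py*x0*tA^2*tB^2 + 2*be^4*px*x0*tA^2*tB^2 - be^4*px*tA^2*tB^2*tC - be^4*px*tA^2*tB^2 - be^4*x0*tA^2*tB^2 - 4*be^3*px*x0*tA^2*tB^2 + be^3*px*x1*tA^2*tB^2 + 2*be^3*px*tA^2*tB^2*tC + 2*be^3*px*tA^2*tB^2 + be^3*py*x0*tA^2*tB^2 + 2*be^3*x0*tA^2*tB^2 + 2*be^2*px*x0*tA^2*tB^2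 - 2*be^2*px*x1*tA^2*tB^2 - be^2*px*tA^2*tB^2*tC - be^2*px*tA^2*tB^2 - 2*be^2*py*x0*tA^2*tB^2 - be^2*x0*tA^2*tB^2 + be*px*x1*tA^2*tB^2 + be*py*x0*tA^2*tB^2) * htC
end
end

section
/- Let A, B, C, D ∈ ℝ² be four points, no three collinear, with each pair of opposite sides non-parallel and diagonal points A₁ = AD ∩ BC, B₁ = AB ∩ CD, C₁ = AC ∩ BD. Let Ω be the zero set of a nonzero real polynomial of degree at most 2 passing through A₁, B₁ and C₁, and assume no side of the quadrangle is contained in Ω. Suppose that for each of the six sides there is a point S ∈ Ω on that side that is distinct from the two quadrangle vertices on the side, distinct from the diagonal point on the side, and distinct from the midpoint of the two vertices; let S' be the harmonic conjugate of S with respect to the two vertices on that side. Then the six points S' so obtained are collinear (Steiner's line). -/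
/-- The value of the degree-≤2 polynomial `a·x² + b·x·y + c·y² + d·x + e·y + f` at a point of
the plane. -/
noncomputable def conicEval (a b c d e f : ℝ) (P : EuclideanSpace ℝ (Fin 2)) : ℝ :=
  a * P 0 ^ 2 + b * P 0 * P 1 + c * P 1 ^ 2 + d * P 0 + e * P 1 + f

noncomputable def qp (a b c d e f x y z : ℝ) : ℝ :=
  a*x^2 + b*x*y + c*y^2 + d*x*z + e*y*z + f*z^2

lemma qp_smul (a b c d e f k x y z : ℝ) :
    qp a b c d e f (k*x) (k*y) (k*z) = k^2 * qp a b c d e f x y z := by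
  simp only [qp]; ring

lemma qp_neg (a b c d e f x y z : ℝ) :
    qp a b c d e f (-x) (-y) (-z) = qp a b c d e f x y z := by
  simp only [qp]; ring

lemma pt_ext {P Q : EuclideanSpace ℝ (Fin 2)} (h0 : P 0 = Q 0) (h1 : P 1 = Q 1) : P = Q :=
  PiLp.ext fun i => match i with | 0 => h0 | 1 => h1

lemma mem_line {P Q R : EuclideanSpace ℝ (Fin 2)} (h : R ∈ line[ℝ, P, Q]) :
    ∃ t : ℝ, R 0 = P 0 + t * (Q 0 - P 0) ∧ R 1 = P 1 + t * (Q 1 - P 1) := by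
  have h' : (R - P) +ᵥ P ∈ line[ℝ, P, Q] := by
    simpa [vadd_eq_add, sub_add_cancel] using h
  obtain ⟨r, hr⟩ := vadd_left_mem_affineSpan_pair.mp h'
  rw [vsub_eq_sub] at hr
  refine ⟨r, ?_, ?_⟩ <;>
  · have h0 := congrArg (fun v => v 0) hr
    have h1 := congrArg (fun v => v 1) hr
    simp only [PiLp.smul_apply, PiLp.sub_apply, smul_eq_mul] at h0 h1
    linarith

set_option linter.unnecessarySeqFocus false in
lemma cross_ne {P Q R : EuclideanSpace ℝ (Fin 2)} (h : AffineIndependent ℝ ![P, Q, R]) :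
    (Q 0 - P 0) * (R 1 - P 1) - (Q 1 - P 1) * (R 0 - P 0) ≠ 0 := by
  intro hc
  rw [affineIndependent_iff_not_collinear] at h
  apply h
  have hrange : Set.range ![P, Q, R] = {P, Q, R} := by
    simp [Matrix.range_cons, Matrix.range_empty, Set.singleton_union]
    ext x; constructor <;> (intro hx; rcases hx with h' | h' | h' <;> simp_all [Set.mem_singleton_iff])
  rw [hrange, collinear_iff_exists_forall_eq_smul_vadd]
  by_cases hx : Q 0 - P 0 = 0
  · by_cases hy : Q 1 - P 1 = 0
    · have hQP : Q = P := pt_ext (by linarith) (by linarith)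
      refine ⟨P, R - P, ?_⟩
      rintro p (h' | h' | h') <;> rw [h']
      · exact ⟨0, by simp⟩
      · exact ⟨0, by simp [hQP]⟩
      · exact ⟨1, by ext i; simp [vadd_eq_add]⟩
    · refine ⟨P, Q - P, ?_⟩
      rintro p (h' | h' | h') <;> rw [h']
      · exact ⟨0, by simp⟩
      · exact ⟨1, by ext i; simp [vadd_eq_add]⟩
      · refine ⟨(R 1 - P 1) / (Q 1 - P 1), pt_ext ?_ ?_⟩ <;>
          simp only [vadd_eq_add, PiLp.add_apply, PiLp.smul_apply,
            PiLp.sub_apply, smul_eq_mul] <;> field_simp <;> nlinarith [hc]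
  · refine ⟨P, Q - P, ?_⟩
    rintro p (h' | h' | h') <;> rw [h']
    · exact ⟨0, by simp⟩
    · exact ⟨1, by ext i; simp [vadd_eq_add]⟩
    · refine ⟨(R 0 - P 0) / (Q 0 - P 0), pt_ext ?_ ?_⟩ <;>
        simp only [vadd_eq_add, PiLp.add_apply, PiLp.smul_apply,
          PiLp.sub_apply, smul_eq_mul] <;> field_simp <;> nlinarith [hc]

lemma w_zero {A0 A1 B0 B1 C0 C1 w2 w3 : ℝ}
    (hcr : (B0 - A0) * (C1 - A1) - (B1 - A1) * (C0 - A0) ≠ 0)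
    (h0 : w2 * (B0 - A0) + w3 * (C0 - A0) = 0)
    (h1 : w2 * (B1 - A1) + w3 * (C1 - A1) = 0) : w2 = 0 ∧ w3 = 0 := by
  constructor
  · have h : w2 * ((B0 - A0) * (C1 - A1) - (B1 - A1) * (C0 - A0)) = 0 := by
      linear_combination (C1 - A1) * h0 - (C0 - A0) * h1
    exact (mul_eq_zero.mp h).resolve_right hcr
  · have h : w3 * ((B0 - A0) * (C1 - A1) - (B1 - A1) * (C0 - A0)) = 0 := by
      linear_combination (B0 - A0) * h1 - (B1 - A1) * h0
    exact (mul_eq_zero.mp h).resolve_right hcr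

/-- diagonal point of the pair of lines (A,B), (C,D) where D = (1-β-γ)A + βB + γC. -/
lemma diag_pt {A0 A1 B0 B1 C0 C1 D0 D1 β γ t r p0 p1 : ℝ}
    (hcr : (B0 - A0) * (C1 - A1) - (B1 - A1) * (C0 - A0) ≠ 0)
    (hD0 : D0 = (1-β-γ)*A0 + β*B0 + γ*C0) (hD1 : D1 = (1-β-γ)*A1 + β*B1 + γ*C1)
    (ht0 : p0 = A0 + t*(B0 - A0)) (ht1 : p1 = A1 + t*(B1 - A1))
    (hr0 : p0 = C0 + r*(D0 - C0)) (hr1 : p1 = C1 + r*(D1 - C1)) :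
    (1 - γ) ≠ 0 ∧ (1-γ)*p0 = (1-β-γ)*A0 + β*B0 ∧ (1-γ)*p1 = (1-β-γ)*A1 + β*B1 := by
  have eq0 : (t - r*β)*(B0 - A0) + (-1 - r*(γ-1))*(C0 - A0) = 0 := by
    linear_combination hr0 - ht0 + r * hD0
  have eq1 : (t - r*β)*(B1 - A1) + (-1 - r*(γ-1))*(C1 - A1) = 0 := by
    linear_combination hr1 - ht1 + r * hD1
  obtain ⟨hw2, hw3⟩ := w_zero hcr eq0 eq1
  have hr1γ : r * (1 - γ) = 1 := by linear_combination hw3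
  have h1γ : (1 : ℝ) - γ ≠ 0 := by
    intro h; rw [h, mul_zero] at hr1γ; exact one_ne_zero hr1γ.symm
  refine ⟨h1γ, ?_, ?_⟩
  · linear_combination (1-γ) * ht0 + (1-γ)*(B0 - A0) * hw2 + β*(B0 - A0) * hr1γ
  · linear_combination (1-γ) * ht1 + (1-γ)*(B1 - A1) * hw2 + β*(B1 - A1) * hr1γ

lemma side_key (a b c d e f X0 X1 Y0 Y1 Xw Yw P0 P1 Lx Ly Lz dt s : ℝ)
    (hXw : Xw ≠ 0) (hYw : Yw ≠ 0) (hsum : Xw + Yw ≠ 0)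
    (hsm : 2 * s - 1 ≠ 0)
    (hP0 : (Xw + Yw) * P0 = Xw * X0 + Yw * Y0) (hP1 : (Xw + Yw) * P1 = Xw * X1 + Yw * Y1)
    (hQS : qp a b c d e f ((1-s)*X0 + s*Y0) ((1-s)*X1 + s*Y1) 1 = 0)
    (hQsum : qp a b c d e f (Xw*X0 + Yw*Y0) (Xw*X1 + Yw*Y1) (Xw + Yw) = 0)
    (hLX : Lx*(Xw*X0) + Ly*(Xw*X1) + Lz*Xw = dt * qp a b c d e f (Xw*X0) (Xw*X1) Xw)
    (hLY : Lx*(Yw*Y0) + Ly*(Yw*Y1) + Lz*Yw = dt * qp a b c d e f (Yw*Y0) (Yw*Y1) Yw)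
    (hne : ¬((1-s)*X0 + s*Y0 = P0 ∧ (1-s)*X1 + s*Y1 = P1)) :
    Lx*(X0 + s/(2*s-1)*(Y0-X0)) + Ly*(X1 + s/(2*s-1)*(Y1-X1)) + Lz = 0 := by
  set u : ℝ := (1 - s) / Xw with hu_def
  set v : ℝ := s / Yw with hv_def
  have hu : u * Xw = 1 - s := by rw [hu_def, div_mul_cancel₀ _ hXw]
  have hv : v * Yw = s := by rw [hv_def, div_mul_cancel₀ _ hYw]
  have key : (u - v) * (Lx * (u*(Xw*X0) - v*(Yw*Y0)) + Ly * (u*(Xw*X1) - v*(Yw*Y1))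
      + Lz * (u*Xw - v*Yw)) = 0 := by
    have expand : dt * qp a b c d e f (u*(Xw*X0) + v*(Yw*Y0)) (u*(Xw*X1) + v*(Yw*Y1)) (u*Xw + v*Yw)
        = u^2 * (dt * qp a b c d e f (Xw*X0) (Xw*X1) Xw)
          + u*v*(dt * qp a b c d e f (Xw*X0 + Yw*Y0) (Xw*X1 + Yw*Y1) (Xw + Yw)
                 - dt * qp a b c d e f (Xw*X0) (Xw*X1) Xw - dt * qp a b c d e f (Yw*Y0) (Yw*Y1) Yw)
          + v^2 * (dt * qp a b c d e f (Yw*Y0) (Yw*Y1) Yw) := by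
      simp only [qp]; ring
    have hS : qp a b c d e f (u*(Xw*X0) + v*(Yw*Y0)) (u*(Xw*X1) + v*(Yw*Y1)) (u*Xw + v*Yw) = 0 := by
      have e0 : u*(Xw*X0) + v*(Yw*Y0) = (1-s)*X0 + s*Y0 := by
        rw [← mul_assoc, ← mul_assoc, hu, hv]
      have e1 : u*(Xw*X1) + v*(Yw*Y1) = (1-s)*X1 + s*Y1 := by
        rw [← mul_assoc, ← mul_assoc, hu, hv]
      have e2 : u*Xw + v*Yw = 1 := by rw [hu, hv]; ring
      rw [e0, e1, e2]; exact hQS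
    rw [hS, hQsum, ← hLX, ← hLY] at expand
    linear_combination -expand
  have huv : u - v ≠ 0 := by
    intro h0
    apply hne
    have hWs : (Xw + Yw) * s = Yw := by
      have huv' : u = v := by linarith
      have h1 : s * Xw = (1 - s) * Yw := by
        calc s * Xw = v * Yw * Xw := by rw [hv]
        _ = u * Xw * Yw := by rw [huv']; ring
        _ = (1 - s) * Yw := by rw [hu]
      linear_combination h1
    constructor
    · have h2 : (Xw + Yw) * ((1-s)*X0 + s*Y0) = (Xw + Yw) * P0 := by
        rw [hP0]; linear_combination X0 * (by linear_combination -hWs : (Xw+Yw)*(1-s) = Xw) + Y0 * hWs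
      exact mul_left_cancel₀ hsum h2
    · have h2 : (Xw + Yw) * ((1-s)*X1 + s*Y1) = (Xw + Yw) * P1 := by
        rw [hP1]; linear_combination X1 * (by linear_combination -hWs : (Xw+Yw)*(1-s) = Xw) + Y1 * hWs
      exact mul_left_cancel₀ hsum h2
  have hlin : Lx * (u*(Xw*X0) - v*(Yw*Y0)) + Ly * (u*(Xw*X1) - v*(Yw*Y1)) + Lz * (u*Xw - v*Yw) = 0 := by
    rcases mul_eq_zero.mp key with h | h
    · exact absurd h huv
    · exact h
  have e0 : u*(Xw*X0) - v*(Yw*Y0) = (1-s)*X0 - s*Y0 := by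
    rw [← mul_assoc, ← mul_assoc, hu, hv]
  have e1 : u*(Xw*X1) - v*(Yw*Y1) = (1-s)*X1 - s*Y1 := by
    rw [← mul_assoc, ← mul_assoc, hu, hv]
  have e2 : u*Xw - v*Yw = 1 - 2*s := by rw [hu, hv]; ring
  rw [e0, e1, e2] at hlin
  have goal' : (1 - 2*s) * (Lx*(X0 + s/(2*s-1)*(Y0-X0)) + Ly*(X1 + s/(2*s-1)*(Y1-X1)) + Lz) = 0 := by
    have hfrac : s/(2*s-1) * (2*s-1) = s := div_mul_cancel₀ _ hsm
    linear_combination hlin - (Lx * (Y0 - X0) + Ly * (Y1 - X1)) * hfrac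
  have h12 : (1 : ℝ) - 2*s ≠ 0 := by intro h; apply hsm; linarith
  rcases mul_eq_zero.mp goal' with h | h
  · exact absurd h h12
  · exact h

lemma on_line_helper {Lx Ly Lz : ℝ} (hL : ¬(Lx = 0 ∧ Ly = 0)) {P Q : EuclideanSpace ℝ (Fin 2)}
    (hP : Lx * P 0 + Ly * P 1 + Lz = 0) (hQ : Lx * Q 0 + Ly * Q 1 + Lz = 0) :
    ∃ r : ℝ, P = r • ((WithLp.equiv 2 (Fin 2 → ℝ)).symm ![-Ly, Lx]) +ᵥ Q := by
  by_cases hx : Lx = 0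
  · have hy : Ly ≠ 0 := fun h => hL ⟨hx, h⟩
    subst hx
    refine ⟨-(P 0 - Q 0)/Ly, pt_ext ?_ ?_⟩ <;>
      simp only [vadd_eq_add, PiLp.add_apply, PiLp.smul_apply, smul_eq_mul,
        WithLp.equiv_symm_apply, PiLp.toLp_apply, Matrix.cons_val_zero, Matrix.cons_val_one,
        Matrix.head_cons]
    · field_simp; ring
    · exact mul_left_cancel₀ hy (by linarith)
  · refine ⟨(P 1 - Q 1)/Lx, pt_ext ?_ ?_⟩ <;>
      simp only [vadd_eq_add, PiLp.add_apply, PiLp.smul_apply, smul_eq_mul,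
        WithLp.equiv_symm_apply, PiLp.toLp_apply, Matrix.cons_val_zero, Matrix.cons_val_one,
        Matrix.head_cons]
    · have h2 : Lx * P 0 = Lx * ((P 1 - Q 1)/Lx * -Ly + Q 0) := by
        field_simp; nlinarith [hP, hQ]
      exact mul_left_cancel₀ hx h2
    · field_simp; ring
lemma cramerA (Ax Ay Aw Bx By Bw Cx Cy Cw qA qB qC : ℝ) :
    (qA*(By*Cw - Bw*Cy) + qB*(Cy*Aw - Cw*Ay) + qC*(Ay*Bw - Aw*By)) * Ax
    + (qA*(Bw*Cx - Bx*Cw) + qB*(Cw*Ax - Cx*Aw) + qC*(Aw*Bx - Ax*Bw)) * Ay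
    + (qA*(Bx*Cy - By*Cx) + qB*(Cx*Ay - Cy*Ax) + qC*(Ax*By - Ay*Bx)) * Aw
    = (Ax*(By*Cw - Bw*Cy) - Ay*(Bx*Cw - Bw*Cx) + Aw*(Bx*Cy - By*Cx)) * qA := by ring

lemma cramerB (Ax Ay Aw Bx By Bw Cx Cy Cw qA qB qC : ℝ) :
    (qA*(By*Cw - Bw*Cy) + qB*(Cy*Aw - Cw*Ay) + qC*(Ay*Bw - Aw*By)) * Bx
    + (qA*(Bw*Cx - Bx*Cw) + qB*(Cw*Ax - Cx*Aw) + qC*(Aw*Bx - Ax*Bw)) * By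
    + (qA*(Bx*Cy - By*Cx) + qB*(Cx*Ay - Cy*Ax) + qC*(Ax*By - Ay*Bx)) * Bw
    = (Ax*(By*Cw - Bw*Cy) - Ay*(Bx*Cw - Bw*Cx) + Aw*(Bx*Cy - By*Cx)) * qB := by ring

lemma cramerC (Ax Ay Aw Bx By Bw Cx Cy Cw qA qB qC : ℝ) :
    (qA*(By*Cw - Bw*Cy) + qB*(Cy*Aw - Cw*Ay) + qC*(Ay*Bw - Aw*By)) * Cx
    + (qA*(Bw*Cx - Bx*Cw) + qB*(Cw*Ax - Cx*Aw) + qC*(Aw*Bx - Ax*Bw)) * Cy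
    + (qA*(Bx*Cy - By*Cx) + qB*(Cx*Ay - Cy*Ax) + qC*(Ax*By - Ay*Bx)) * Cw
    = (Ax*(By*Cw - Bw*Cy) - Ay*(Bx*Cw - Bw*Cx) + Aw*(Bx*Cy - By*Cx)) * qC := by ring

lemma cramerD (Ax Ay Aw Bx By Bw Cx Cy Cw qA qB qC Dx Dy Dw qD : ℝ)
    (hDx : Dx = -(Ax + Bx + Cx)) (hDy : Dy = -(Ay + By + Cy)) (hDw : Dw = -(Aw + Bw + Cw))
    (hqD : qD = -(qA + qB + qC)) :
    (qA*(By*Cw - Bw*Cy) + qB*(Cy*Aw - Cw*Ay) + qC*(Ay*Bw - Aw*By)) * Dx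
    + (qA*(Bw*Cx - Bx*Cw) + qB*(Cw*Ax - Cx*Aw) + qC*(Aw*Bx - Ax*Bw)) * Dy
    + (qA*(Bx*Cy - By*Cx) + qB*(Cx*Ay - Cy*Ax) + qC*(Ax*By - Ay*Bx)) * Dw
    = (Ax*(By*Cw - Bw*Cy) - Ay*(Bx*Cw - Bw*Cx) + Aw*(Bx*Cy - By*Cx)) * qD := by
  rw [hDx, hDy, hDw, hqD]; ring
lemma diag_pt2 {A0 A1 B0 B1 C0 C1 D0 D1 β γ t r p0 p1 : ℝ}
    (hcr : (B0 - A0)*(C1 - A1) - (B1 - A1)*(C0 - A0) ≠ 0)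
    (hD0 : D0 = (1-β-γ)*A0 + β*B0 + γ*C0) (hD1 : D1 = (1-β-γ)*A1 + β*B1 + γ*C1)
    (ht0 : p0 = A0 + t*(D0 - A0)) (ht1 : p1 = A1 + t*(D1 - A1))
    (hr0 : p0 = B0 + r*(C0 - B0)) (hr1 : p1 = B1 + r*(C1 - B1)) :
    (β + γ) ≠ 0 ∧ (β+γ)*p0 = β*B0 + γ*C0 ∧ (β+γ)*p1 = β*B1 + γ*C1 := by
  have eq0 : (t*β - 1 + r)*(B0 - A0) + (t*γ - r)*(C0 - A0) = 0 := by
    linear_combination hr0 - ht0 - t*hD0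
  have eq1 : (t*β - 1 + r)*(B1 - A1) + (t*γ - r)*(C1 - A1) = 0 := by
    linear_combination hr1 - ht1 - t*hD1
  obtain ⟨hw2, hw3⟩ := w_zero hcr eq0 eq1
  have ht' : t*(β+γ) = 1 := by linear_combination hw2 + hw3
  have hbg : β + γ ≠ 0 := by intro h; rw [h, mul_zero] at ht'; exact one_ne_zero ht'.symm
  refine ⟨hbg, ?_, ?_⟩
  · linear_combination (β+γ)*hr0 - (β+γ)*(C0-B0)*hw3 + γ*(C0-B0)*ht'
  · linear_combination (β+γ)*hr1 - (β+γ)*(C1-B1)*hw3 + γ*(C1-B1)*ht'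


set_option maxHeartbeats 1000000 in
/-- **Steiner's line.** Let `Ω` be a conic through the diagonal points `A₁, B₁, C₁` of a
complete quadrangle `A B C D`, containing no side of the quadrangle.  If on each side a point
`S` of `Ω` distinct from the two vertices, from the diagonal point and from the midpoint of
the side is chosen (parametrized as `A + s•(B - A)` with `s ∉ {0, 1, 1/2}`), then the six
harmonic conjugates `S' = A + (s/(2s-1))•(B - A)` of these points with respect to the two
vertices on the respective sides are collinear. -/
theorem steiner_line
    (A B C D A₁ B₁ C₁ : EuclideanSpace ℝ (Fin 2))
    (h1 : AffineIndependent ℝ ![A, B, C])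
    (h2 : AffineIndependent ℝ ![A, B, D])
    (h3 : AffineIndependent ℝ ![A, C, D])
    (h4 : AffineIndependent ℝ ![B, C, D])
    (hpar1 : ¬ AffineSubspace.Parallel line[ℝ, A, B] line[ℝ, C, D])
    (hpar2 : ¬ AffineSubspace.Parallel line[ℝ, A, C] line[ℝ, B, D])
    (hpar3 : ¬ AffineSubspace.Parallel line[ℝ, A, D] line[ℝ, B, C])
    (hA₁1 : A₁ ∈ line[ℝ, A, D]) (hA₁2 : A₁ ∈ line[ℝ, B, C])
    (hB₁1 : B₁ ∈ line[ℝ, A, B]) (hB₁2 : B₁ ∈ line[ℝ, C, D])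
    (hC₁1 : C₁ ∈ line[ℝ, A, C]) (hC₁2 : C₁ ∈ line[ℝ, B, D])
    -- `Ω` is the conic `conicEval a b c d e f = 0`; it passes through `A₁`, `B₁`, `C₁`
    (a b c d e f : ℝ)
    (hq : (a, b, c, d, e, f) ≠ (0, 0, 0, 0, 0, 0))
    (hΩA₁ : conicEval a b c d e f A₁ = 0)
    (hΩB₁ : conicEval a b c d e f B₁ = 0)
    (hΩC₁ : conicEval a b c d e f C₁ = 0)
    -- no side of the quadrangle is contained in `Ω`
    (hs1 : ¬ ∀ P ∈ line[ℝ, A, B], conicEval a b c d e f P = 0)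
    (hs2 : ¬ ∀ P ∈ line[ℝ, A, C], conicEval a b c d e f P = 0)
    (hs3 : ¬ ∀ P ∈ line[ℝ, A, D], conicEval a b c d e f P = 0)
    (hs4 : ¬ ∀ P ∈ line[ℝ, B, C], conicEval a b c d e f P = 0)
    (hs5 : ¬ ∀ P ∈ line[ℝ, B, D], conicEval a b c d e f P = 0)
    (hs6 : ¬ ∀ P ∈ line[ℝ, C, D], conicEval a b c d e f P = 0)
    -- the chosen point of `Ω` on each side, distinct from the two vertices, from the
    -- midpoint, and from the diagonal point on that side
    (sAB sAC sAD sBC sBD sCD : ℝ)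
    (hAB0 : sAB ≠ 0) (hAB1 : sAB ≠ 1) (hABm : sAB ≠ 1 / 2)
    (hABΩ : conicEval a b c d e f (A + sAB • (B - A)) = 0)
    (hABd : A + sAB • (B - A) ≠ B₁)
    (hAC0 : sAC ≠ 0) (hAC1 : sAC ≠ 1) (hACm : sAC ≠ 1 / 2)
    (hACΩ : conicEval a b c d e f (A + sAC • (C - A)) = 0)
    (hACd : A + sAC • (C - A) ≠ C₁)
    (hAD0 : sAD ≠ 0) (hAD1 : sAD ≠ 1) (hADm : sAD ≠ 1 / 2)
    (hADΩ : conicEval a b c d e f (A + sAD • (D - A)) = 0)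
    (hADd : A + sAD • (D - A) ≠ A₁)
    (hBC0 : sBC ≠ 0) (hBC1 : sBC ≠ 1) (hBCm : sBC ≠ 1 / 2)
    (hBCΩ : conicEval a b c d e f (B + sBC • (C - B)) = 0)
    (hBCd : B + sBC • (C - B) ≠ A₁)
    (hBD0 : sBD ≠ 0) (hBD1 : sBD ≠ 1) (hBDm : sBD ≠ 1 / 2)
    (hBDΩ : conicEval a b c d e f (B + sBD • (D - B)) = 0)
    (hBDd : B + sBD • (D - B) ≠ C₁)
    (hCD0 : sCD ≠ 0) (hCD1 : sCD ≠ 1) (hCDm : sCD ≠ 1 / 2)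
    (hCDΩ : conicEval a b c d e f (C + sCD • (D - C)) = 0)
    (hCDd : C + sCD • (D - C) ≠ B₁) :
    Collinear ℝ ({A + (sAB / (2 * sAB - 1)) • (B - A),
                  A + (sAC / (2 * sAC - 1)) • (C - A),
                  A + (sAD / (2 * sAD - 1)) • (D - A),
                  B + (sBC / (2 * sBC - 1)) • (C - B),
                  B + (sBD / (2 * sBD - 1)) • (D - B),
                  C + (sCD / (2 * sCD - 1)) • (D - C)} :
      Set (EuclideanSpace ℝ (Fin 2))) := by
  have cr1 := cross_ne h1
  have cr2 := cross_ne h2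
  have cr3 := cross_ne h3
  have cr4 := cross_ne h4
  set β : ℝ := ((D 0 - A 0)*(C 1 - A 1) - (D 1 - A 1)*(C 0 - A 0)) /
      ((B 0 - A 0)*(C 1 - A 1) - (B 1 - A 1)*(C 0 - A 0)) with hβdef
  set γ : ℝ := ((B 0 - A 0)*(D 1 - A 1) - (B 1 - A 1)*(D 0 - A 0)) /
      ((B 0 - A 0)*(C 1 - A 1) - (B 1 - A 1)*(C 0 - A 0)) with hγdef
  have hD0 : D 0 = (1-β-γ)*A 0 + β*B 0 + γ*C 0 := by
    rw [hβdef, hγdef]; linear_combination (-(D 0 - A 0)) * mul_inv_cancel₀ cr1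
  have hD1 : D 1 = (1-β-γ)*A 1 + β*B 1 + γ*C 1 := by
    rw [hβdef, hγdef]; linear_combination (-(D 1 - A 1)) * mul_inv_cancel₀ cr1
  have hN : (1:ℝ)-β-γ ≠ 0 := by
    intro h0
    exact cr4 (by linear_combination (C 0 - B 0)*hD1 - (C 1 - B 1)*hD0 +
      ((C 0 - B 0)*A 1 - (C 1 - B 1)*A 0 - (C 0 - B 0)*B 1 + (C 1 - B 1)*B 0)*h0)
  have hβ0 : β ≠ 0 := by
    intro h0
    exact cr3 (by linear_combination (C 0 - A 0)*hD1 - (C 1 - A 1)*hD0 +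
      ((C 0 - A 0)*(B 1 - A 1) - (C 1 - A 1)*(B 0 - A 0))*h0)
  have hγ0 : γ ≠ 0 := by
    intro h0
    exact cr2 (by linear_combination (B 0 - A 0)*hD1 - (B 1 - A 1)*hD0 +
      ((B 0 - A 0)*(C 1 - A 1) - (B 1 - A 1)*(C 0 - A 0))*h0)
  -- diagonal point B₁ on AB ∩ CD
  obtain ⟨tB, htB0, htB1⟩ := mem_line hB₁1
  obtain ⟨rB, hrB0, hrB1⟩ := mem_line hB₁2
  obtain ⟨h1γ, hB₁e0, hB₁e1⟩ := diag_pt cr1 hD0 hD1 htB0 htB1 hrB0 hrB1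
  -- diagonal point C₁ on AC ∩ BD  (roles B ↔ C swapped)
  have cr1' : (C 0 - A 0)*(B 1 - A 1) - (C 1 - A 1)*(B 0 - A 0) ≠ 0 := by
    intro h; exact cr1 (by linear_combination -h)
  have hD0s : D 0 = (1-γ-β)*A 0 + γ*C 0 + β*B 0 := by linear_combination hD0
  have hD1s : D 1 = (1-γ-β)*A 1 + γ*C 1 + β*B 1 := by linear_combination hD1
  obtain ⟨tC, htC0, htC1⟩ := mem_line hC₁1
  obtain ⟨rC, hrC0, hrC1⟩ := mem_line hC₁2
  obtain ⟨h1β, hC₁e0raw, hC₁e1raw⟩ := diag_pt cr1' hD0s hD1s htC0 htC1 hrC0 hrC1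
  have hC₁e0 : (1-β)*C₁ 0 = (1-β-γ)*A 0 + γ*C 0 := by linear_combination hC₁e0raw
  have hC₁e1 : (1-β)*C₁ 1 = (1-β-γ)*A 1 + γ*C 1 := by linear_combination hC₁e1raw
  -- diagonal point A₁ on AD ∩ BC
  obtain ⟨tA, htA0, htA1⟩ := mem_line hA₁1
  obtain ⟨rA, hrA0, hrA1⟩ := mem_line hA₁2
  obtain ⟨hβγ, hA₁e0, hA₁e1⟩ := diag_pt2 cr1 hD0 hD1 htA0 htA1 hrA0 hrA1
  -- conic values at diagonal points
  have baseB₁ : qp a b c d e f (B₁ 0) (B₁ 1) 1 = 0 := by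
    simp only [conicEval] at hΩB₁; simp only [qp]; linear_combination hΩB₁
  have baseC₁ : qp a b c d e f (C₁ 0) (C₁ 1) 1 = 0 := by
    simp only [conicEval] at hΩC₁; simp only [qp]; linear_combination hΩC₁
  have baseA₁ : qp a b c d e f (A₁ 0) (A₁ 1) 1 = 0 := by
    simp only [conicEval] at hΩA₁; simp only [qp]; linear_combination hΩA₁
  -- the conic vanishes on the six lift-sums
  have hQAB : qp a b c d e f ((1-β-γ)*A 0 + β*B 0) ((1-β-γ)*A 1 + β*B 1) ((1-β-γ) + β) = 0 := by
    have h' : qp a b c d e f ((1-γ)*B₁ 0) ((1-γ)*B₁ 1) ((1-γ)*1) = 0 := by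
      rw [qp_smul, baseB₁, mul_zero]
    rw [hB₁e0, hB₁e1, show (1-γ)*(1:ℝ) = (1-β-γ) + β by ring] at h'
    exact h'
  have hQAC : qp a b c d e f ((1-β-γ)*A 0 + γ*C 0) ((1-β-γ)*A 1 + γ*C 1) ((1-β-γ) + γ) = 0 := by
    have h' : qp a b c d e f ((1-β)*C₁ 0) ((1-β)*C₁ 1) ((1-β)*1) = 0 := by
      rw [qp_smul, baseC₁, mul_zero]
    rw [hC₁e0, hC₁e1, show (1-β)*(1:ℝ) = (1-β-γ) + γ by ring] at h'
    exact h'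
  have hQBC : qp a b c d e f (β*B 0 + γ*C 0) (β*B 1 + γ*C 1) (β + γ) = 0 := by
    have h' : qp a b c d e f ((β+γ)*A₁ 0) ((β+γ)*A₁ 1) ((β+γ)*1) = 0 := by
      rw [qp_smul, baseA₁, mul_zero]
    rw [hA₁e0, hA₁e1, show (β+γ)*(1:ℝ) = β + γ by ring] at h'
    exact h'
  have hQCD : qp a b c d e f (γ*C 0 + (-1)*D 0) (γ*C 1 + (-1)*D 1) (γ + (-1)) = 0 := by
    rw [show γ*C 0 + (-1)*D 0 = -((1-β-γ)*A 0 + β*B 0) by linear_combination -hD0,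
        show γ*C 1 + (-1)*D 1 = -((1-β-γ)*A 1 + β*B 1) by linear_combination -hD1,
        show γ + (-1:ℝ) = -((1-β-γ) + β) by ring, qp_neg]
    exact hQAB
  have hQBD : qp a b c d e f (β*B 0 + (-1)*D 0) (β*B 1 + (-1)*D 1) (β + (-1)) = 0 := by
    rw [show β*B 0 + (-1)*D 0 = -((1-β-γ)*A 0 + γ*C 0) by linear_combination -hD0,
        show β*B 1 + (-1)*D 1 = -((1-β-γ)*A 1 + γ*C 1) by linear_combination -hD1,
        show β + (-1:ℝ) = -((1-β-γ) + γ) by ring, qp_neg]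
    exact hQAC
  have hQAD : qp a b c d e f ((1-β-γ)*A 0 + (-1)*D 0) ((1-β-γ)*A 1 + (-1)*D 1) ((1-β-γ) + (-1)) = 0 := by
    rw [show (1-β-γ)*A 0 + (-1)*D 0 = -(β*B 0 + γ*C 0) by linear_combination -hD0,
        show (1-β-γ)*A 1 + (-1)*D 1 = -(β*B 1 + γ*C 1) by linear_combination -hD1,
        show (1-β-γ) + (-1:ℝ) = -(β + γ) by ring, qp_neg]
    exact hQBC
  -- the Steiner line coefficients (Cramer construction)
  set dt : ℝ := ((1-β-γ)*A 0)*((β*B 1)*γ - β*(γ*C 1)) - ((1-β-γ)*A 1)*((β*B 0)*γ - β*(γ*C 0))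
      + (1-β-γ)*((β*B 0)*(γ*C 1) - (β*B 1)*(γ*C 0)) with hdtdef
  set Lx : ℝ := qp a b c d e f ((1-β-γ)*A 0) ((1-β-γ)*A 1) (1-β-γ) * ((β*B 1)*γ - β*(γ*C 1))
    + qp a b c d e f (β*B 0) (β*B 1) β * ((γ*C 1)*(1-β-γ) - γ*((1-β-γ)*A 1))
    + qp a b c d e f (γ*C 0) (γ*C 1) γ * (((1-β-γ)*A 1)*β - (1-β-γ)*(β*B 1)) with hLxdef
  set Ly : ℝ := qp a b c d e f ((1-β-γ)*A 0) ((1-β-γ)*A 1) (1-β-γ) * (β*(γ*C 0) - (β*B 0)*γ)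
    + qp a b c d e f (β*B 0) (β*B 1) β * (γ*((1-β-γ)*A 0) - (γ*C 0)*(1-β-γ))
    + qp a b c d e f (γ*C 0) (γ*C 1) γ * ((1-β-γ)*(β*B 0) - ((1-β-γ)*A 0)*β) with hLydef
  set Lz : ℝ := qp a b c d e f ((1-β-γ)*A 0) ((1-β-γ)*A 1) (1-β-γ) * ((β*B 0)*(γ*C 1) - (β*B 1)*(γ*C 0))
    + qp a b c d e f (β*B 0) (β*B 1) β * ((γ*C 0)*((1-β-γ)*A 1) - (γ*C 1)*((1-β-γ)*A 0))
    + qp a b c d e f (γ*C 0) (γ*C 1) γ * (((1-β-γ)*A 0)*(β*B 1) - ((1-β-γ)*A 1)*(β*B 0)) with hLzdef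
  have hLA : Lx*((1-β-γ)*A 0) + Ly*((1-β-γ)*A 1) + Lz*(1-β-γ)
      = dt * qp a b c d e f ((1-β-γ)*A 0) ((1-β-γ)*A 1) (1-β-γ) := by
    rw [hLxdef, hLydef, hLzdef, hdtdef]
    exact cramerA ((1-β-γ)*A 0) ((1-β-γ)*A 1) (1-β-γ) (β*B 0) (β*B 1) β (γ*C 0) (γ*C 1) γ _ _ _
  have hLB : Lx*(β*B 0) + Ly*(β*B 1) + Lz*β = dt * qp a b c d e f (β*B 0) (β*B 1) β := by
    rw [hLxdef, hLydef, hLzdef, hdtdef]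
    exact cramerB ((1-β-γ)*A 0) ((1-β-γ)*A 1) (1-β-γ) (β*B 0) (β*B 1) β (γ*C 0) (γ*C 1) γ _ _ _
  have hLC : Lx*(γ*C 0) + Ly*(γ*C 1) + Lz*γ = dt * qp a b c d e f (γ*C 0) (γ*C 1) γ := by
    rw [hLxdef, hLydef, hLzdef, hdtdef]
    exact cramerC ((1-β-γ)*A 0) ((1-β-γ)*A 1) (1-β-γ) (β*B 0) (β*B 1) β (γ*C 0) (γ*C 1) γ _ _ _
  have hqD : qp a b c d e f ((-1)*D 0) ((-1)*D 1) (-1)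
      = -(qp a b c d e f ((1-β-γ)*A 0) ((1-β-γ)*A 1) (1-β-γ)
          + qp a b c d e f (β*B 0) (β*B 1) β + qp a b c d e f (γ*C 0) (γ*C 1) γ) := by
    have h1' := hQAB; have h2' := hQAC; have h3' := hQBC
    rw [hD0, hD1]
    simp only [qp] at h1' h2' h3' ⊢
    linear_combination h1' + h2' + h3'
  have hLD : Lx*((-1)*D 0) + Ly*((-1)*D 1) + Lz*(-1)
      = dt * qp a b c d e f ((-1)*D 0) ((-1)*D 1) (-1) := by
    rw [hLxdef, hLydef, hLzdef, hdtdef]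
    exact cramerD ((1-β-γ)*A 0) ((1-β-γ)*A 1) (1-β-γ) (β*B 0) (β*B 1) β (γ*C 0) (γ*C 1) γ
      _ _ _ ((-1)*D 0) ((-1)*D 1) (-1) _
      (by linear_combination -hD0) (by linear_combination -hD1) (by ring) hqD
  have hdtne : dt ≠ 0 := by
    rw [hdtdef,
      show ((1-β-γ)*A 0)*((β*B 1)*γ - β*(γ*C 1)) - ((1-β-γ)*A 1)*((β*B 0)*γ - β*(γ*C 0))
        + (1-β-γ)*((β*B 0)*(γ*C 1) - (β*B 1)*(γ*C 0))
        = (1-β-γ)*β*γ*((B 0 - A 0)*(C 1 - A 1) - (B 1 - A 1)*(C 0 - A 0)) by ring]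
    exact mul_ne_zero (mul_ne_zero (mul_ne_zero hN hβ0) hγ0) cr1
  clear_value dt Lx Ly Lz
  clear hLxdef hLydef hLzdef hdtdef
  -- glue: convert the chosen-point hypotheses to scalar form
  have coord : ∀ (P Q : EuclideanSpace ℝ (Fin 2)) (s : ℝ),
      (P + s • (Q - P)) 0 = P 0 + s * (Q 0 - P 0) ∧ (P + s • (Q - P)) 1 = P 1 + s * (Q 1 - P 1) := by
    intro P Q s
    constructor <;> simp [PiLp.add_apply, PiLp.smul_apply, PiLp.sub_apply]
  have mkQS : ∀ (P Q : EuclideanSpace ℝ (Fin 2)) (s : ℝ),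
      conicEval a b c d e f (P + s • (Q - P)) = 0 →
      qp a b c d e f ((1-s)*P 0 + s*Q 0) ((1-s)*P 1 + s*Q 1) 1 = 0 := by
    intro P Q s h
    simp only [conicEval, PiLp.add_apply, PiLp.smul_apply, PiLp.sub_apply, smul_eq_mul] at h
    simp only [qp]; linear_combination h
  have mkne : ∀ (P Q R : EuclideanSpace ℝ (Fin 2)) (s : ℝ), P + s • (Q - P) ≠ R →
      ¬((1-s)*P 0 + s*Q 0 = R 0 ∧ (1-s)*P 1 + s*Q 1 = R 1) := by
    rintro P Q R s hne ⟨e0, e1⟩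
    apply hne
    apply pt_ext
    · rw [(coord P Q s).1]; linarith
    · rw [(coord P Q s).2]; linarith
  -- side AB
  have resAB := side_key a b c d e f (A 0) (A 1) (B 0) (B 1) (1-β-γ) β (B₁ 0) (B₁ 1) Lx Ly Lz dt sAB
    hN hβ0 (fun h => h1γ (by linarith)) (fun h => hABm (by linarith))
    (by linear_combination hB₁e0) (by linear_combination hB₁e1)
    (mkQS A B sAB hABΩ) hQAB hLA hLB (mkne A B B₁ sAB hABd)
  -- side AC
  have resAC := side_key a b c d e f (A 0) (A 1) (C 0) (C 1) (1-β-γ) γ (C₁ 0) (C₁ 1) Lx Ly Lz dt sAC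
    hN hγ0 (fun h => h1β (by linarith)) (fun h => hACm (by linarith))
    (by linear_combination hC₁e0) (by linear_combination hC₁e1)
    (mkQS A C sAC hACΩ) hQAC hLA hLC (mkne A C C₁ sAC hACd)
  -- side AD
  have resAD := side_key a b c d e f (A 0) (A 1) (D 0) (D 1) (1-β-γ) (-1) (A₁ 0) (A₁ 1) Lx Ly Lz dt sAD
    hN (by norm_num) (fun h => hβγ (by linarith)) (fun h => hADm (by linarith))
    (by linear_combination -hA₁e0 + hD0) (by linear_combination -hA₁e1 + hD1)
    (mkQS A D sAD hADΩ) hQAD hLA hLD (mkne A D A₁ sAD hADd)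
  -- side BC
  have resBC := side_key a b c d e f (B 0) (B 1) (C 0) (C 1) β γ (A₁ 0) (A₁ 1) Lx Ly Lz dt sBC
    hβ0 hγ0 hβγ (fun h => hBCm (by linarith))
    (by linear_combination hA₁e0) (by linear_combination hA₁e1)
    (mkQS B C sBC hBCΩ) hQBC hLB hLC (mkne B C A₁ sBC hBCd)
  -- side BD
  have resBD := side_key a b c d e f (B 0) (B 1) (D 0) (D 1) β (-1) (C₁ 0) (C₁ 1) Lx Ly Lz dt sBD
    hβ0 (by norm_num) (fun h => h1β (by linarith)) (fun h => hBDm (by linarith))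
    (by linear_combination -hC₁e0 + hD0) (by linear_combination -hC₁e1 + hD1)
    (mkQS B D sBD hBDΩ) hQBD hLB hLD (mkne B D C₁ sBD hBDd)
  -- side CD
  have resCD := side_key a b c d e f (C 0) (C 1) (D 0) (D 1) γ (-1) (B₁ 0) (B₁ 1) Lx Ly Lz dt sCD
    hγ0 (by norm_num) (fun h => h1γ (by linarith)) (fun h => hCDm (by linarith))
    (by linear_combination -hB₁e0 + hD0) (by linear_combination -hB₁e1 + hD1)
    (mkQS C D sCD hCDΩ) hQCD hLC hLD (mkne C D B₁ sCD hCDd)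
  by_cases hdeg : Lx = 0 ∧ Ly = 0
  · -- degenerate: then the conic would vanish on line AB, contradiction
    exfalso
    obtain ⟨hx0, hy0⟩ := hdeg
    have hz0 : Lz = 0 := by
      have h := resAB; rw [hx0, hy0] at h
      simpa using h
    have hqA : qp a b c d e f ((1-β-γ)*A 0) ((1-β-γ)*A 1) (1-β-γ) = 0 := by
      have h := hLA; rw [hx0, hy0, hz0] at h
      have h2 : dt * qp a b c d e f ((1-β-γ)*A 0) ((1-β-γ)*A 1) (1-β-γ) = 0 := by linarith
      exact (mul_eq_zero.mp h2).resolve_left hdtne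
    have hqB : qp a b c d e f (β*B 0) (β*B 1) β = 0 := by
      have h := hLB; rw [hx0, hy0, hz0] at h
      have h2 : dt * qp a b c d e f (β*B 0) (β*B 1) β = 0 := by linarith
      exact (mul_eq_zero.mp h2).resolve_left hdtne
    have hA' : qp a b c d e f (A 0) (A 1) 1 = 0 := by
      have h' : qp a b c d e f ((1-β-γ)*A 0) ((1-β-γ)*A 1) ((1-β-γ)*1) = 0 := by
        rw [mul_one]; exact hqA
      rw [qp_smul] at h'
      exact (mul_eq_zero.mp h').resolve_left (pow_ne_zero 2 hN)
    have hB' : qp a b c d e f (B 0) (B 1) 1 = 0 := by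
      have h' : qp a b c d e f (β*B 0) (β*B 1) (β*1) = 0 := by
        rw [mul_one]; exact hqB
      rw [qp_smul] at h'
      exact (mul_eq_zero.mp h').resolve_left (pow_ne_zero 2 hβ0)
    have hQb : qp a b c d e f (A 0 + B 0) (A 1 + B 1) (1+1) = 0 := by
      have h2 : ((1-β-γ)*β) * qp a b c d e f (A 0 + B 0) (A 1 + B 1) (1+1) = 0 := by
        have h1' := hQAB; have hA'' := hA'; have hB'' := hB'
        simp only [qp] at h1' hA'' hB'' ⊢
        linear_combination h1' + ((1-β-γ)*β - (1-β-γ)^2)*hA'' + ((1-β-γ)*β - β^2)*hB''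
      exact (mul_eq_zero.mp h2).resolve_left (mul_ne_zero hN hβ0)
    apply hs1
    intro P hP
    obtain ⟨t, hp0, hp1⟩ := mem_line hP
    have hval : qp a b c d e f (P 0) (P 1) 1 = 0 := by
      rw [hp0, hp1]
      have hA'' := hA'; have hB'' := hB'; have hQb' := hQb
      simp only [qp] at hA'' hB'' hQb' ⊢
      linear_combination ((1-t)^2 - t*(1-t))*hA'' + (t^2 - t*(1-t))*hB'' + t*(1-t)*hQb'
    simp only [conicEval]
    simp only [qp] at hval
    linear_combination hval
  · -- main case: all six points lie on the line Lx·x + Ly·y + Lz = 0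
    rw [collinear_iff_of_mem (Set.mem_insert _ _)]
    refine ⟨(WithLp.equiv 2 (Fin 2 → ℝ)).symm ![-Ly, Lx], ?_⟩
    have k1 : Lx * ((A + (sAB / (2 * sAB - 1)) • (B - A)) 0)
        + Ly * ((A + (sAB / (2 * sAB - 1)) • (B - A)) 1) + Lz = 0 := by
      rw [(coord A B _).1, (coord A B _).2]; exact resAB
    have k2 : Lx * ((A + (sAC / (2 * sAC - 1)) • (C - A)) 0)
        + Ly * ((A + (sAC / (2 * sAC - 1)) • (C - A)) 1) + Lz = 0 := by
      rw [(coord A C _).1, (coord A C _).2]; exact resAC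
    have k3 : Lx * ((A + (sAD / (2 * sAD - 1)) • (D - A)) 0)
        + Ly * ((A + (sAD / (2 * sAD - 1)) • (D - A)) 1) + Lz = 0 := by
      rw [(coord A D _).1, (coord A D _).2]; exact resAD
    have k4 : Lx * ((B + (sBC / (2 * sBC - 1)) • (C - B)) 0)
        + Ly * ((B + (sBC / (2 * sBC - 1)) • (C - B)) 1) + Lz = 0 := by
      rw [(coord B C _).1, (coord B C _).2]; exact resBC
    have k5 : Lx * ((B + (sBD / (2 * sBD - 1)) • (D - B)) 0)
        + Ly * ((B + (sBD / (2 * sBD - 1)) • (D - B)) 1) + Lz = 0 := by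
      rw [(coord B D _).1, (coord B D _).2]; exact resBD
    have k6 : Lx * ((C + (sCD / (2 * sCD - 1)) • (D - C)) 0)
        + Ly * ((C + (sCD / (2 * sCD - 1)) • (D - C)) 1) + Lz = 0 := by
      rw [(coord C D _).1, (coord C D _).2]; exact resCD
    intro p hp
    simp only [Set.mem_insert_iff, Set.mem_singleton_iff] at hp
    rcases hp with rfl | rfl | rfl | rfl | rfl | rfl
    · exact on_line_helper hdeg k1 k1
    · exact on_line_helper hdeg k2 k1
    · exact on_line_helper hdeg k3 k1
    · exact on_line_helper hdeg k4 k1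
    · exact on_line_helper hdeg k5 k1
    · exact on_line_helper hdeg k6 k1
end
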